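/- arXiv:math/9504215 — 4 statements merged into one kernel-verified Lean document; each statement's English description precedes it below -/
import Mathlib

section
/- Let α, β, ρ be real numbers with β > α > -1 and 0 < β + ρ + 1 < (β - α)/2. Then the function f(θ) = (2 cos²(θ/2))^{ρ} belongs to L_{(α,β)}, and its Fourier–Jacobi coefficients satisfy |f̂_{(α,β)}(k)| → ∞ as k → ∞; in fact there exist positive constants C, C′ such that C′ (k+1)^{-2ρ-α-β-2} ≤ |f̂_{(α,β)}(k)| ≤ C (k+1)^{-2ρ-α-β-2} for all k, where the exponent -2ρ-α-β-2 = β - α - 2(β+ρ+1) is positive. -/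
open MeasureTheory Filter Set

noncomputable section

/-- Generalized binomial coefficient `C(a, m) = Γ(a+1)/(Γ(m+1)Γ(a-m+1))`. -/
def genBinom (a : ℝ) (m : ℕ) : ℝ :=
  Real.Gamma (a + 1) / (Real.Gamma ((m : ℝ) + 1) * Real.Gamma (a - (m : ℝ) + 1))

/-- The Jacobi polynomial `P_k^{(α,β)}(x)`. -/
def jacobiP (α β : ℝ) (k : ℕ) (x : ℝ) : ℝ :=
  ∑ s ∈ Finset.range (k + 1),
    genBinom ((k : ℝ) + α) (k - s) * genBinom ((k : ℝ) + β) s *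
      ((x - 1) / 2) ^ s * ((x + 1) / 2) ^ (k - s)

/-- The normalized Jacobi polynomial `R_k^{(α,β)}(x) = P_k^{(α,β)}(x)/P_k^{(α,β)}(1)`. -/
def jacobiR (α β : ℝ) (k : ℕ) (x : ℝ) : ℝ := jacobiP α β k x / jacobiP α β k 1

/-- The Jacobi weight `(sin(θ/2))^{2α+1} (cos(θ/2))^{2β+1}`. -/
def jacobiWeight (α β : ℝ) (θ : ℝ) : ℝ :=
  Real.sin (θ / 2) ^ (2 * α + 1) * Real.cos (θ / 2) ^ (2 * β + 1)

/-- `f ∈ L_{(α,β)}`: `f` is integrable on `[0,π]` against the Jacobi weight. -/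
def MemJacobiL (α β : ℝ) (f : ℝ → ℝ) : Prop :=
  IntegrableOn (fun θ => f θ * jacobiWeight α β θ) (Ioc 0 Real.pi)

/-- The norm `‖f‖_{L_{(α,β)}}`. -/
def jacobiNorm (α β : ℝ) (f : ℝ → ℝ) : ℝ :=
  ∫ θ in Ioc (0 : ℝ) Real.pi, |f θ| * jacobiWeight α β θ

/-- The `k`-th Fourier–Jacobi coefficient `f̂_{(α,β)}(k)`. -/
def fourierJacobi (α β : ℝ) (f : ℝ → ℝ) (k : ℕ) : ℝ :=
  ∫ θ in Ioc (0 : ℝ) Real.pi, f θ * jacobiR α β k (Real.cos θ) * jacobiWeight α β θ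

end

open Real Finset


lemma complex_eq_real_on (a b : ℝ) : ∀ᵐ (x : ℝ) ∂(volume.restrict (Ioo (0:ℝ) 1)),
    ((x:ℂ) ^ ((a:ℂ) - 1) * ((1:ℂ) - (x:ℂ)) ^ ((b:ℂ) - 1)) = ((x ^ (a-1) * (1-x) ^ (b-1) : ℝ) : ℂ) := by
  filter_upwards [ae_restrict_mem measurableSet_Ioo] with x hx
  have h1 : (x:ℂ) ^ ((a:ℂ) - 1) = ((x ^ (a-1) : ℝ) : ℂ) := by
    rw [show ((a:ℂ)-1) = ((a-1:ℝ):ℂ) by push_cast; ring, ← Complex.ofReal_cpow hx.1.le]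
  have h2 : ((1:ℂ) - (x:ℂ)) ^ ((b:ℂ) - 1) = (((1-x) ^ (b-1) : ℝ) : ℂ) := by
    rw [show ((1:ℂ) - (x:ℂ)) = ((1 - x : ℝ) : ℂ) by push_cast; ring,
      show ((b:ℂ)-1) = ((b-1:ℝ):ℂ) by push_cast; ring,
      ← Complex.ofReal_cpow (by linarith [hx.2] : (0:ℝ) ≤ 1 - x)]
  rw [h1, h2]; push_cast; ring

lemma betaReal_integrable {a b : ℝ} (ha : 0 < a) (hb : 0 < b) :
    IntegrableOn (fun x => x ^ (a-1) * (1-x) ^ (b-1)) (Ioo (0:ℝ) 1) := by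
  have h := Complex.betaIntegral_convergent (u := a) (v := b) (by simpa) (by simpa)
  rw [intervalIntegrable_iff_integrableOn_Ioo_of_le (by norm_num)] at h
  have h2 : IntegrableOn (fun x : ℝ => ((x ^ (a-1) * (1-x) ^ (b-1) : ℝ) : ℂ)) (Ioo (0:ℝ) 1) :=
    h.congr_fun_ae (complex_eq_real_on a b)
  simpa [IntegrableOn] using h2.re

lemma betaReal_eq {a b : ℝ} (ha : 0 < a) (hb : 0 < b) :
    ∫ x in Ioo (0:ℝ) 1, x ^ (a-1) * (1-x) ^ (b-1)
      = Real.Gamma a * Real.Gamma b / Real.Gamma (a+b) := by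
  have hG : Complex.Gamma a * Complex.Gamma b
      = Complex.Gamma ((a:ℂ)+b) * Complex.betaIntegral a b := by
    have := Complex.Gamma_mul_Gamma_eq_betaIntegral (s := a) (t := b) (by simpa) (by simpa)
    simpa using this
  have hne : Complex.Gamma ((a:ℂ)+b) ≠ 0 := by
    rw [show ((a:ℂ)+b) = ((a+b : ℝ):ℂ) by push_cast; ring, Complex.Gamma_ofReal]
    exact_mod_cast (Real.Gamma_pos_of_pos (by linarith)).ne'
  have hbeta : Complex.betaIntegral a b
      = Complex.Gamma a * Complex.Gamma b / Complex.Gamma ((a:ℂ)+b) := by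
    field_simp at hG ⊢; rw [hG]
  have hval : Complex.betaIntegral a b
      = ∫ x in Ioo (0:ℝ) 1, ((x ^ (a-1) * (1-x) ^ (b-1) : ℝ) : ℂ) := by
    rw [Complex.betaIntegral, intervalIntegral.integral_of_le (by norm_num : (0:ℝ) ≤ 1),
      MeasureTheory.integral_Ioc_eq_integral_Ioo]
    exact integral_congr_ae (complex_eq_real_on a b)
  rw [show (∫ x in Ioo (0:ℝ) 1, ((x ^ (a-1) * (1-x) ^ (b-1) : ℝ) : ℂ))
      = ((∫ x in Ioo (0:ℝ) 1, x ^ (a-1) * (1-x) ^ (b-1) : ℝ) : ℂ) from integral_ofReal] at hval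
  have h3 := hbeta.symm.trans hval
  rw [show Complex.Gamma (a:ℂ) = ((Real.Gamma a : ℝ):ℂ) from (Complex.Gamma_ofReal a),
    show Complex.Gamma (b:ℂ) = ((Real.Gamma b : ℝ):ℂ) from (Complex.Gamma_ofReal b),
    show ((a:ℂ)+b) = ((a+b:ℝ):ℂ) by push_cast; ring,
    Complex.Gamma_ofReal] at h3
  have h4 := congrArg Complex.re h3
  simpa using h4.symm


noncomputable def poch (x : ℝ) (n : ℕ) : ℝ := ∏ i ∈ Finset.range n, (x + i)

lemma poch_zero (x : ℝ) : poch x 0 = 1 := by simp [poch]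

lemma poch_succ (x : ℝ) (n : ℕ) : poch x (n+1) = poch x n * (x + n) := by
  simp [poch, Finset.prod_range_succ]

lemma poch_succ' (x : ℝ) (n : ℕ) : poch x (n+1) = x * poch (x+1) n := by
  unfold poch
  rw [Finset.prod_range_succ']
  simp only [Nat.cast_zero, add_zero]
  rw [mul_comm]
  congr 1
  exact Finset.prod_congr rfl (fun i _ => by push_cast; ring)

lemma poch_pos {x : ℝ} (hx : 0 < x) (n : ℕ) : 0 < poch x n :=
  Finset.prod_pos (fun i _ => by positivity)

lemma poch_ne_zero {x : ℝ} (hx : ∀ i : ℕ, x + i ≠ 0) (n : ℕ) : poch x n ≠ 0 :=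
  Finset.prod_ne_zero_iff.2 (fun i _ => hx i)

lemma Gamma_poch {x : ℝ} (hx : 0 < x) (n : ℕ) :
    Real.Gamma (x + n) = poch x n * Real.Gamma x := by
  induction n with
  | zero => simp [poch_zero]
  | succ n ih =>
    have : x + (n+1 : ℕ) = (x + n) + 1 := by push_cast; ring
    rw [this, Real.Gamma_add_one (by positivity), ih, poch_succ]; ring

lemma chu (k : ℕ) : ∀ a c : ℝ, (∀ i : ℕ, c + i ≠ 0) →
    ∑ j ∈ range (k+1), (-1:ℝ)^j * (k.choose j) * poch a j / poch c j
      = poch (c-a) k / poch c k := by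
  induction k with
  | zero => intro a c _; simp [poch_zero]
  | succ k ih =>
    intro a c hc
    have hP : poch c k ≠ 0 := poch_ne_zero hc k
    have hP1 : poch c (k+1) ≠ 0 := poch_ne_zero hc (k+1)
    have hc0 : c ≠ 0 := by simpa using hc 0
    have hck : c + k ≠ 0 := hc k
    have hc1 : ∀ i : ℕ, (c+1) + i ≠ 0 := by
      intro i
      intro h; apply hc (i+1); push_cast; linarith
    have hQ : poch (c+1) k ≠ 0 := poch_ne_zero hc1 k
    set F : ℕ → ℝ := fun j => (-1:ℝ)^j * (((k+1).choose j : ℕ) : ℝ) * poch a j / poch c j with hF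
    set G : ℕ → ℝ := fun j => (-1:ℝ)^j * ((k.choose j : ℕ) : ℝ) * poch a j / poch c j with hG
    have e1 : ∑ j ∈ range (k+1+1), F j = (∑ i ∈ range (k+1), F (i+1)) + F 0 :=
      Finset.sum_range_succ' F (k+1)
    have e2 : ∀ i, F (i+1) = G (i+1)
        + (-(1:ℝ))^(i+1) * ((k.choose i : ℕ) : ℝ) * poch a (i+1) / poch c (i+1) := by
      intro i
      simp only [hF, hG, Nat.choose_succ_succ k i]
      push_cast
      ring
    have e3 : ∑ i ∈ range (k+1), F (i+1)
        = (∑ i ∈ range (k+1), G (i+1))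
          + ∑ i ∈ range (k+1), (-(1:ℝ))^(i+1) * ((k.choose i : ℕ) : ℝ)
              * poch a (i+1) / poch c (i+1) := by
      rw [← Finset.sum_add_distrib]
      exact Finset.sum_congr rfl (fun i _ => e2 i)
    have e4 : (∑ i ∈ range (k+1), G (i+1)) + F 0 = ∑ j ∈ range (k+1), G j := by
      have hF0 : F 0 = G 0 := by simp [hF, hG]
      rw [hF0, ← Finset.sum_range_succ' G (k+1), Finset.sum_range_succ G (k+1)]
      simp [hG, Nat.choose_succ_self]
    have e5 : ∀ i : ℕ, (-(1:ℝ))^(i+1) * ((k.choose i : ℕ) : ℝ) * poch a (i+1) / poch c (i+1)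
        = -(a/c) * ((-(1:ℝ))^i * ((k.choose i : ℕ) : ℝ) * poch (a+1) i / poch (c+1) i) := by
      intro i
      rw [poch_succ' a i, poch_succ' c i]
      field_simp
      ring
    have e6 : ∑ i ∈ range (k+1), (-(1:ℝ))^(i+1) * ((k.choose i : ℕ) : ℝ)
          * poch a (i+1) / poch c (i+1)
        = -(a/c) * (poch (c-a) k / poch (c+1) k) := by
      rw [Finset.sum_congr rfl (fun i _ => e5 i), ← Finset.mul_sum]
      have := ih (a+1) (c+1) hc1
      rw [show (c+1) - (a+1) = c - a by ring] at this
      rw [this]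
    calc ∑ j ∈ range (k+1+1), F j
        = (∑ j ∈ range (k+1), G j) + (-(a/c) * (poch (c-a) k / poch (c+1) k)) := by
          rw [e1, e3, e6]; rw [add_right_comm, e4]
      _ = poch (c-a) k / poch c k - (a/c) * (poch (c-a) k / poch (c+1) k) := by
          rw [ih a c hc]; ring
      _ = poch (c-a) (k+1) / poch c (k+1) := by
          rw [poch_succ (c-a) k, poch_succ c k]
          have hrel : c * poch (c+1) k = poch c k * (c + (k:ℝ)) := by
            rw [← poch_succ' c k, poch_succ c k]
          have hQval : poch (c+1) k = poch c k * (c + (k:ℝ)) / c := by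
            field_simp [← hrel]
            exact hrel
          rw [hQval]
          field_simp
          ring

lemma cos_eq_one_sub (θ : ℝ) : Real.cos θ = 1 - 2 * Real.sin (θ/2)^2 := by
  have h1 : Real.cos (2 * (θ/2)) = 2 * Real.cos (θ/2)^2 - 1 := Real.cos_two_mul (θ/2)
  have h2 := Real.sin_sq_add_cos_sq (θ/2)
  rw [show 2 * (θ/2) = θ by ring] at h1
  linarith

lemma covDeriv (θ : ℝ) : HasDerivAt (fun t : ℝ => Real.sin (t/2)^2)
    (Real.sin (θ/2) * Real.cos (θ/2)) θ := by
  have h0 : HasDerivAt (fun t : ℝ => t/2) (1/2) θ := (hasDerivAt_id θ).div_const 2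
  have h1 : HasDerivAt (fun t : ℝ => Real.sin (t/2)) (Real.cos (θ/2) * (1/2)) θ :=
    by have := (Real.hasDerivAt_sin (θ/2)).comp θ h0; exact this
  have h2 := h1.fun_pow 2
  refine h2.congr_deriv ?_
  rw [show (2:ℕ)-1 = 1 from rfl]; push_cast; ring

lemma covInj : InjOn (fun t : ℝ => Real.sin (t/2)^2) (Ioo 0 Real.pi) := by
  intro x hx y hy hxy
  have hcx : Real.cos x = Real.cos y := by
    rw [cos_eq_one_sub x, cos_eq_one_sub y]; simp only at hxy; rw [hxy]
  exact Real.injOn_cos ⟨hx.1.le, hx.2.le⟩ ⟨hy.1.le, hy.2.le⟩ hcx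

lemma sin_half_mem {θ : ℝ} (hθ : θ ∈ Ioo 0 Real.pi) : Real.sin (θ/2)^2 ∈ Ioo (0:ℝ) 1 := by
  have h1 : 0 < Real.sin (θ/2) :=
    Real.sin_pos_of_pos_of_lt_pi (by linarith [hθ.1]) (by linarith [hθ.2, Real.pi_pos])
  have h2 : 0 < Real.cos (θ/2) :=
    Real.cos_pos_of_mem_Ioo ⟨by linarith [hθ.1, Real.pi_pos], by linarith [hθ.2]⟩
  have h3 := Real.sin_sq_add_cos_sq (θ/2)
  constructor
  · positivity
  · nlinarith

lemma covImg : (fun t : ℝ => Real.sin (t/2)^2) '' (Ioo 0 Real.pi) = Ioo (0:ℝ) 1 := by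
  apply Set.Subset.antisymm
  · rintro y ⟨θ, hθ, rfl⟩
    exact sin_half_mem hθ
  · have h := intermediate_value_Ioo (a := (0:ℝ)) (b := Real.pi)
      (f := fun t : ℝ => Real.sin (t/2)^2) Real.pi_pos.le
      (Continuous.continuousOn (by continuity))
    simpa using h

lemma covIntegral (g : ℝ → ℝ) :
    ∫ x in Ioo (0:ℝ) 1, g x
      = ∫ θ in Ioo (0:ℝ) Real.pi,
          (Real.sin (θ/2) * Real.cos (θ/2)) * g (Real.sin (θ/2)^2) := by
  rw [← covImg, integral_image_eq_integral_abs_deriv_smul measurableSet_Ioo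
    (fun θ _ => (covDeriv θ).hasDerivWithinAt) covInj g]
  apply integral_congr_ae
  filter_upwards [ae_restrict_mem measurableSet_Ioo] with θ hθ
  have h1 : 0 < Real.sin (θ/2) :=
    Real.sin_pos_of_pos_of_lt_pi (by linarith [hθ.1]) (by linarith [hθ.2, Real.pi_pos])
  have h2 : 0 < Real.cos (θ/2) :=
    Real.cos_pos_of_mem_Ioo ⟨by linarith [hθ.1, Real.pi_pos], by linarith [hθ.2]⟩
  rw [smul_eq_mul, abs_of_nonneg (by positivity)]

lemma covIntegrable (g : ℝ → ℝ) :
    IntegrableOn g (Ioo (0:ℝ) 1) ↔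
      IntegrableOn (fun θ => (Real.sin (θ/2) * Real.cos (θ/2)) * g (Real.sin (θ/2)^2))
        (Ioo (0:ℝ) Real.pi) := by
  rw [← covImg, integrableOn_image_iff_integrableOn_abs_deriv_smul measurableSet_Ioo
    (fun θ _ => (covDeriv θ).hasDerivWithinAt) covInj g]
  apply integrableOn_congr_fun
  · intro θ hθ
    have h1 : 0 < Real.sin (θ/2) :=
      Real.sin_pos_of_pos_of_lt_pi (by linarith [hθ.1]) (by linarith [hθ.2, Real.pi_pos])
    have h2 : 0 < Real.cos (θ/2) :=
      Real.cos_pos_of_mem_Ioo ⟨by linarith [hθ.1, Real.pi_pos], by linarith [hθ.2]⟩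
    simp only [smul_eq_mul]
    rw [abs_of_nonneg (by positivity)]
  · exact measurableSet_Ioo

lemma sumEval (α β ρ : ℝ) (hα : -1 < α) (hβ : -1 < β) (hσ : 0 < β + ρ + 1) (k : ℕ) :
    ∑ s ∈ range (k+1), (genBinom ((k:ℝ)+α) (k-s) * genBinom ((k:ℝ)+β) s * (-1:ℝ)^s * 2^ρ)
        * (Real.Gamma (α+(s:ℝ)+1) * Real.Gamma (β+ρ+(k:ℝ)-(s:ℝ)+1)
            / Real.Gamma (α+β+ρ+(k:ℝ)+2))
      = (-1:ℝ)^k * 2^ρ * Real.Gamma (β+ρ+1) * Real.Gamma ((k:ℝ)+α+1) * poch (-ρ) k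
          / ((k.factorial : ℝ) * Real.Gamma (α+β+ρ+(k:ℝ)+2)) := by
  have hβ1 : (0:ℝ) < β + 1 := by linarith
  have hβne : ∀ i : ℕ, (β+1) + (i:ℝ) ≠ 0 := fun i => by positivity
  have hD : (0:ℝ) < Real.Gamma (α+β+ρ+(k:ℝ)+2) :=
    Real.Gamma_pos_of_pos (by push_cast; linarith [Nat.cast_nonneg (α := ℝ) k])
  set K : ℝ := 2^ρ * Real.Gamma ((k:ℝ)+α+1) * Real.Gamma ((k:ℝ)+β+1) * Real.Gamma (β+ρ+1)
      / ((k.factorial : ℝ) * Real.Gamma (β+1) * Real.Gamma (α+β+ρ+(k:ℝ)+2)) with hK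
  have step1 : ∀ s ∈ range (k+1),
      (genBinom ((k:ℝ)+α) (k-s) * genBinom ((k:ℝ)+β) s * (-1:ℝ)^s * 2^ρ)
        * (Real.Gamma (α+(s:ℝ)+1) * Real.Gamma (β+ρ+(k:ℝ)-(s:ℝ)+1)
            / Real.Gamma (α+β+ρ+(k:ℝ)+2))
      = K * ((-1:ℝ)^s * (k.choose s : ℝ) * poch (β+ρ+1) (k-s) / poch (β+1) (k-s)) := by
    intro s hs
    have hsk : s ≤ k := Nat.lt_succ_iff.mp (Finset.mem_range.mp hs)
    have hcast : ((k - s : ℕ) : ℝ) = (k:ℝ) - (s:ℝ) := by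
      push_cast [Nat.cast_sub hsk]; ring
    -- expand genBinoms
    have hg1 : genBinom ((k:ℝ)+α) (k-s)
        = Real.Gamma ((k:ℝ)+α+1) / (((k-s).factorial : ℝ) * Real.Gamma (α+(s:ℝ)+1)) := by
      rw [genBinom, hcast]
      rw [show (k:ℝ) + α - ((k:ℝ) - (s:ℝ)) + 1 = α+(s:ℝ)+1 by ring]
      rw [show (k:ℝ) - (s:ℝ) + 1 = (((k-s:ℕ):ℝ) + 1) by rw [hcast]]
      rw [Real.Gamma_nat_eq_factorial]
    have hg2 : genBinom ((k:ℝ)+β) s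
        = Real.Gamma ((k:ℝ)+β+1) / ((s.factorial : ℝ) * Real.Gamma ((β+1)+((k-s:ℕ):ℝ))) := by
      rw [genBinom]
      rw [show (k:ℝ) + β - (s:ℝ) + 1 = (β+1)+((k-s:ℕ):ℝ) by rw [hcast]; ring]
      rw [Real.Gamma_nat_eq_factorial]
    have hG1 : Real.Gamma (β+ρ+(k:ℝ)-(s:ℝ)+1) = poch (β+ρ+1) (k-s) * Real.Gamma (β+ρ+1) := by
      rw [show β+ρ+(k:ℝ)-(s:ℝ)+1 = (β+ρ+1) + ((k-s:ℕ):ℝ) by rw [hcast]; ring]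
      exact Gamma_poch hσ (k-s)
    have hG2 : Real.Gamma ((β+1)+((k-s:ℕ):ℝ)) = poch (β+1) (k-s) * Real.Gamma (β+1) :=
      Gamma_poch hβ1 (k-s)
    have hchoose : ((k.choose s : ℕ) : ℝ) * (s.factorial : ℝ) * ((k-s).factorial : ℝ)
        = (k.factorial : ℝ) := by
      exact_mod_cast congrArg (Nat.cast (R := ℝ)) (Nat.choose_mul_factorial_mul_factorial hsk)
    have hGα : Real.Gamma (α+(s:ℝ)+1) ≠ 0 := (Real.Gamma_pos_of_pos (by
      push_cast; linarith [Nat.cast_nonneg (α := ℝ) s])).ne'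
    have hGβ : Real.Gamma (β+1) ≠ 0 := (Real.Gamma_pos_of_pos hβ1).ne'
    have hpoch : poch (β+1) (k-s) ≠ 0 := (poch_pos hβ1 _).ne'
    have hf1 : ((k-s).factorial : ℝ) ≠ 0 := Nat.cast_ne_zero.2 (Nat.factorial_ne_zero _)
    have hf2 : (s.factorial : ℝ) ≠ 0 := Nat.cast_ne_zero.2 (Nat.factorial_ne_zero _)
    have hf3 : (k.factorial : ℝ) ≠ 0 := Nat.cast_ne_zero.2 (Nat.factorial_ne_zero _)
    rw [hg1, hg2, hG1, hG2, hK]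
    field_simp
    rw [← hchoose]
    ring
  rw [Finset.sum_congr rfl step1, ← Finset.mul_sum]
  -- reflect the sum
  have hrefl : ∑ s ∈ range (k+1),
      ((-1:ℝ)^s * (k.choose s : ℝ) * poch (β+ρ+1) (k-s) / poch (β+1) (k-s))
      = (-1:ℝ)^k * ∑ j ∈ range (k+1),
          ((-1:ℝ)^j * (k.choose j : ℝ) * poch (β+ρ+1) j / poch (β+1) j) := by
    rw [← Finset.sum_range_reflect]
    rw [Finset.mul_sum]
    apply Finset.sum_congr rfl
    intro j hj
    have hjk : j ≤ k := Nat.lt_succ_iff.mp (Finset.mem_range.mp hj)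
    have h1 : k + 1 - 1 - j = k - j := by omega
    have h2 : k - (k - j) = j := by omega
    have h3 : (k.choose (k-j) : ℝ) = (k.choose j : ℝ) := by
      exact_mod_cast congrArg (Nat.cast (R := ℝ)) (Nat.choose_symm hjk)
    have h4 : ((-1:ℝ))^(k-j) = (-1:ℝ)^k * (-1:ℝ)^j := by
      have : ((-1:ℝ))^(k-j) * (-1:ℝ)^j = (-1:ℝ)^k := by
        rw [← pow_add]; congr 1; omega
      have hj2 : ((-1:ℝ)^j) * ((-1:ℝ)^j) = 1 := by
        rw [← pow_add, ← two_mul, pow_mul]; norm_num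
      calc ((-1:ℝ))^(k-j) = ((-1:ℝ))^(k-j) * (((-1:ℝ)^j) * ((-1:ℝ)^j)) := by rw [hj2]; ring
        _ = (-1:ℝ)^k * (-1:ℝ)^j := by rw [← mul_assoc, this]
    rw [h1, h2, h3, h4]
    ring
  rw [hrefl, chu k (β+ρ+1) (β+1) hβne]
  rw [show (β+1) - (β+ρ+1) = -ρ by ring]
  have hGk : Real.Gamma ((k:ℝ)+β+1) = poch (β+1) k * Real.Gamma (β+1) := by
    rw [show (k:ℝ)+β+1 = (β+1) + (k:ℝ) by ring]
    exact Gamma_poch hβ1 k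
  rw [hK, hGk]
  have hGβ : Real.Gamma (β+1) ≠ 0 := (Real.Gamma_pos_of_pos hβ1).ne'
  have hpoch : poch (β+1) k ≠ 0 := (poch_pos hβ1 _).ne'
  have hf3 : (k.factorial : ℝ) ≠ 0 := Nat.cast_ne_zero.2 (Nat.factorial_ne_zero _)
  field_simp

section Main
variable {α β ρ : ℝ} (hα : -1 < α) (hαβ : α < β) (hσ : 0 < β + ρ + 1)
  (hρ' : β + ρ + 1 < (β - α) / 2)

lemma betaReal_integrable' {p q : ℝ} (hp : -1 < p) (hq : -1 < q) :
    IntegrableOn (fun x => x ^ p * (1-x) ^ q) (Ioo (0:ℝ) 1) := by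
  have h := betaReal_integrable (a := p+1) (b := q+1) (by linarith) (by linarith)
  simpa using h

lemma betaReal_eq' {p q : ℝ} (hp : -1 < p) (hq : -1 < q) :
    ∫ x in Ioo (0:ℝ) 1, x ^ p * (1-x) ^ q
      = Real.Gamma (p+1) * Real.Gamma (q+1) / Real.Gamma (p+q+2) := by
  have h := betaReal_eq (a := p+1) (b := q+1) (by linarith) (by linarith)
  simpa [show p+1+(q+1) = p+q+2 by ring] using h

include hα hαβ in
lemma jacobiP_one (k : ℕ) :
    jacobiP α β k 1 = Real.Gamma ((k:ℝ)+α+1) / ((k.factorial : ℝ) * Real.Gamma (α+1)) := by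
  rw [jacobiP, Finset.sum_eq_single_of_mem 0 (Finset.mem_range.2 (Nat.succ_pos k))]
  · rw [show ((1:ℝ)-1)/2 = 0 by norm_num, show ((1:ℝ)+1)/2 = 1 by norm_num]
    simp only [pow_zero, one_pow, Nat.sub_zero, mul_one]
    rw [genBinom, genBinom]
    rw [show (k:ℝ) + β - (0:ℕ) + 1 = (k:ℝ)+β+1 by push_cast; ring]
    rw [show (k:ℝ) + α - (k:ℕ) + 1 = α+1 by push_cast; ring]
    rw [show ((0:ℕ):ℝ) + 1 = 1 by norm_num, Real.Gamma_one]
    rw [show ((k:ℕ):ℝ) + 1 = (k:ℝ)+1 by norm_num]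
    have h1 : Real.Gamma ((k:ℝ)+1) = (k.factorial : ℝ) := by
      exact_mod_cast Real.Gamma_nat_eq_factorial k
    have h2 : Real.Gamma ((k:ℝ)+β+1) ≠ 0 :=
      (Real.Gamma_pos_of_pos (by have := Nat.cast_nonneg (α := ℝ) k; linarith [hαβ])).ne'
    rw [h1]
    field_simp
  · intro s hs hs0
    rw [show ((1:ℝ)-1)/2 = 0 by norm_num, zero_pow hs0]
    ring

include hα hαβ in
lemma jacobiP_one_pos (k : ℕ) : 0 < jacobiP α β k 1 := by
  rw [jacobiP_one hα hαβ]
  have h1 : 0 < Real.Gamma ((k:ℝ)+α+1) :=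
    Real.Gamma_pos_of_pos (by have := Nat.cast_nonneg (α := ℝ) k; linarith)
  have h2 : 0 < Real.Gamma (α+1) := Real.Gamma_pos_of_pos (by linarith)
  have h3 : 0 < (k.factorial : ℝ) := by exact_mod_cast Nat.factorial_pos k
  positivity

include hα hσ in
lemma Hk_expand (k : ℕ) : ∀ x ∈ Ioo (0:ℝ) 1,
    (2*(1-x))^ρ * jacobiP α β k (1-2*x) * (x^α * (1-x)^β)
      = ∑ s ∈ Finset.range (k+1),
          (genBinom ((k:ℝ)+α) (k-s) * genBinom ((k:ℝ)+β) s * (-1:ℝ)^s * 2^ρ) *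
            (x ^ (α+(s:ℝ)) * (1-x) ^ (β+ρ+(k:ℝ)-(s:ℝ))) := by
  intro x hx
  have hx0 : 0 < x := hx.1
  have h1x : 0 < 1 - x := by linarith [hx.2]
  rw [jacobiP, Finset.mul_sum, Finset.sum_mul]
  apply Finset.sum_congr rfl
  intro s hs
  have hsk : s ≤ k := Nat.lt_succ_iff.mp (Finset.mem_range.mp hs)
  have hcast : ((k - s : ℕ) : ℝ) = (k:ℝ) - (s:ℝ) := by push_cast [Nat.cast_sub hsk]; ring
  rw [show ((1-2*x) - 1)/2 = -x by ring, show ((1-2*x) + 1)/2 = 1-x by ring]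
  have e1 : (2*(1-x))^ρ = 2^ρ * (1-x)^ρ := Real.mul_rpow (by norm_num) h1x.le
  have e2 : (-x)^s = (-1:ℝ)^s * x^s := by rw [neg_pow]
  have e3 : x^α * (x:ℝ)^(s:ℕ) = x ^ (α+(s:ℝ)) := by
    rw [← Real.rpow_natCast x s, ← Real.rpow_add hx0]
  have e4 : (1-x)^ρ * (1-x)^β * ((1-x):ℝ)^(k-s:ℕ) = (1-x) ^ (β+ρ+(k:ℝ)-(s:ℝ)) := by
    rw [← Real.rpow_natCast (1-x) (k-s), ← Real.rpow_add h1x, ← Real.rpow_add h1x, hcast]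
    congr 1
    ring
  rw [e1, e2, ← e3, ← e4]
  ring

include hα hαβ hσ in
lemma coefH (k : ℕ) :
    ∫ x in Ioo (0:ℝ) 1, (2*(1-x))^ρ * jacobiP α β k (1-2*x) * (x^α * (1-x)^β)
      = (-1:ℝ)^k * 2^ρ * Real.Gamma (β+ρ+1) * Real.Gamma ((k:ℝ)+α+1) * poch (-ρ) k
          / ((k.factorial : ℝ) * Real.Gamma (α+β+ρ+(k:ℝ)+2)) := by
  have hβ : -1 < β := by linarith
  rw [setIntegral_congr_fun measurableSet_Ioo (Hk_expand hα hσ k)]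
  rw [MeasureTheory.integral_finset_sum]
  · have hterm : ∀ s ∈ Finset.range (k+1),
        (∫ x in Ioo (0:ℝ) 1, (genBinom ((k:ℝ)+α) (k-s) * genBinom ((k:ℝ)+β) s
            * (-1:ℝ)^s * 2^ρ) * (x ^ (α+(s:ℝ)) * (1-x) ^ (β+ρ+(k:ℝ)-(s:ℝ))))
          = (genBinom ((k:ℝ)+α) (k-s) * genBinom ((k:ℝ)+β) s * (-1:ℝ)^s * 2^ρ)
            * (Real.Gamma (α+(s:ℝ)+1) * Real.Gamma (β+ρ+(k:ℝ)-(s:ℝ)+1)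
                / Real.Gamma (α+β+ρ+(k:ℝ)+2)) := by
      intro s hs
      have hsk : s ≤ k := Nat.lt_succ_iff.mp (Finset.mem_range.mp hs)
      have hks : (0:ℝ) ≤ (k:ℝ) - (s:ℝ) := by
        have := Nat.cast_le (α := ℝ).2 hsk; linarith
      rw [MeasureTheory.integral_const_mul]
      congr 1
      have := betaReal_eq' (p := α+(s:ℝ)) (q := β+ρ+(k:ℝ)-(s:ℝ))
        (by have := Nat.cast_nonneg (α := ℝ) s; linarith) (by linarith)
      rw [this, show α+(s:ℝ)+(β+ρ+(k:ℝ)-(s:ℝ))+2 = α+β+ρ+(k:ℝ)+2 by ring]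
    rw [Finset.sum_congr rfl hterm]
    exact sumEval α β ρ hα hβ hσ k
  · intro s hs
    have hsk : s ≤ k := Nat.lt_succ_iff.mp (Finset.mem_range.mp hs)
    have hks : (0:ℝ) ≤ (k:ℝ) - (s:ℝ) := by
      have := Nat.cast_le (α := ℝ).2 hsk; linarith
    exact (betaReal_integrable' (p := α+(s:ℝ)) (q := β+ρ+(k:ℝ)-(s:ℝ))
      (by have := Nat.cast_nonneg (α := ℝ) s; linarith) (by linarith)).const_mul _

include hα hαβ hσ in
lemma coefG (k : ℕ) :
    ∫ x in Ioo (0:ℝ) 1, (2*(1-x))^ρ * jacobiR α β k (1-2*x) * (x^α * (1-x)^β)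
      = (-1:ℝ)^k * 2^ρ * Real.Gamma (β+ρ+1) * Real.Gamma (α+1) * poch (-ρ) k
          / Real.Gamma (α+β+ρ+(k:ℝ)+2) := by
  have hP1 : 0 < jacobiP α β k 1 := jacobiP_one_pos hα hαβ k
  have heq : (fun x : ℝ => (2*(1-x))^ρ * jacobiR α β k (1-2*x) * (x^α * (1-x)^β))
      = fun x : ℝ => ((2*(1-x))^ρ * jacobiP α β k (1-2*x) * (x^α * (1-x)^β))
          / jacobiP α β k 1 := by
    funext x; rw [jacobiR]; ring
  rw [heq, integral_div, coefH hα hαβ hσ k, jacobiP_one hα hαβ k]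
  have h1 : Real.Gamma ((k:ℝ)+α+1) ≠ 0 :=
    (Real.Gamma_pos_of_pos (by have := Nat.cast_nonneg (α := ℝ) k; linarith)).ne'
  have h2 : Real.Gamma (α+1) ≠ 0 := (Real.Gamma_pos_of_pos (by linarith)).ne'
  have h3 : (k.factorial : ℝ) ≠ 0 := Nat.cast_ne_zero.2 (Nat.factorial_ne_zero _)
  have h4 : Real.Gamma (α+β+ρ+(k:ℝ)+2) ≠ 0 :=
    (Real.Gamma_pos_of_pos (by have := Nat.cast_nonneg (α := ℝ) k; linarith)).ne'
  field_simp

include hα hαβ hσ in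
lemma integrand_eq (k : ℕ) : ∀ θ ∈ Ioo (0:ℝ) Real.pi,
    (2*Real.cos (θ/2)^(2:ℕ))^ρ * jacobiR α β k (Real.cos θ) * jacobiWeight α β θ
      = (Real.sin (θ/2) * Real.cos (θ/2)) *
          ((2*(1-Real.sin (θ/2)^2))^ρ * jacobiR α β k (1-2*Real.sin (θ/2)^2) *
            ((Real.sin (θ/2)^2)^α * (1-Real.sin (θ/2)^2)^β)) := by
  intro θ hθ
  have hs : 0 < Real.sin (θ/2) :=
    Real.sin_pos_of_pos_of_lt_pi (by linarith [hθ.1]) (by linarith [hθ.2, Real.pi_pos])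
  have hc : 0 < Real.cos (θ/2) :=
    Real.cos_pos_of_mem_Ioo ⟨by linarith [hθ.1, Real.pi_pos], by linarith [hθ.2]⟩
  have hsq := Real.sin_sq_add_cos_sq (θ/2)
  have hc2 : 1 - Real.sin (θ/2)^2 = Real.cos (θ/2)^2 := by linarith
  have hcos : Real.cos θ = 1 - 2*Real.sin (θ/2)^2 := cos_eq_one_sub θ
  have w1 : Real.sin (θ/2) ^ (2*α+1) = (Real.sin (θ/2)^(2:ℕ))^α * Real.sin (θ/2) := by
    rw [Real.rpow_add hs, Real.rpow_one]
    congr 1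
    rw [← Real.rpow_natCast (Real.sin (θ/2)) 2, ← Real.rpow_mul hs.le]
    norm_num
  have w2 : Real.cos (θ/2) ^ (2*β+1) = (Real.cos (θ/2)^(2:ℕ))^β * Real.cos (θ/2) := by
    rw [Real.rpow_add hc, Real.rpow_one]
    congr 1
    rw [← Real.rpow_natCast (Real.cos (θ/2)) 2, ← Real.rpow_mul hc.le]
    norm_num
  rw [jacobiWeight, w1, w2, hcos, hc2]
  ring

include hα hαβ hσ in
lemma coefVal (k : ℕ) :
    fourierJacobi α β (fun θ => (2 * Real.cos (θ / 2) ^ (2 : ℕ)) ^ ρ) k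
      = (-1:ℝ)^k * 2^ρ * Real.Gamma (β+ρ+1) * Real.Gamma (α+1) * poch (-ρ) k
          / Real.Gamma (α+β+ρ+(k:ℝ)+2) := by
  rw [fourierJacobi, MeasureTheory.integral_Ioc_eq_integral_Ioo,
    setIntegral_congr_fun measurableSet_Ioo (integrand_eq hα hαβ hσ k),
    ← covIntegral (fun x => (2*(1-x))^ρ * jacobiR α β k (1-2*x) * (x^α * (1-x)^β))]
  exact coefG hα hαβ hσ k



lemma rpow_le_rpow_nonpos {A B t : ℝ} (hA : 0 < A) (hAB : A ≤ B) (ht : t ≤ 0) :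
    B ^ t ≤ A ^ t := by
  have hB : 0 < B := lt_of_lt_of_le hA hAB
  have h1 : A ^ (-t) ≤ B ^ (-t) := Real.rpow_le_rpow hA.le hAB (by linarith)
  rw [← neg_neg t, Real.rpow_neg hA.le, Real.rpow_neg hB.le]
  have hApos := Real.rpow_pos_of_pos hA (-t)
  exact inv_anti₀ hApos h1

lemma gautschi_upper {x s : ℝ} (hx : 0 < x) (hs0 : 0 ≤ s) (hs1 : s ≤ 1) :
    Real.Gamma (x+s) ≤ Real.Gamma x * x ^ s := by
  have hG : 0 < Real.Gamma x := Real.Gamma_pos_of_pos hx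
  rcases eq_or_lt_of_le hs0 with h0 | h0
  · simp [← h0, Real.rpow_zero]
  rcases eq_or_lt_of_le hs1 with h1 | h1
  · subst h1
    rw [Real.Gamma_add_one hx.ne', Real.rpow_one, mul_comm]
  · have key := Real.Gamma_mul_add_mul_le_rpow_Gamma_mul_rpow_Gamma
      (s := x) (t := x+1) hx (by linarith) (a := 1-s) (b := s) (by linarith) h0 (by ring)
    rw [show (1-s)*x + s*(x+1) = x + s by ring] at key
    calc Real.Gamma (x+s) ≤ Real.Gamma x ^ (1-s) * Real.Gamma (x+1) ^ s := key
      _ = Real.Gamma x * x ^ s := by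
          rw [Real.Gamma_add_one hx.ne', Real.mul_rpow hx.le hG.le]
          rw [show Real.Gamma x ^ (1-s) * (x^s * Real.Gamma x ^ s)
              = (Real.Gamma x ^ (1-s) * Real.Gamma x ^ s) * x^s from by ring]
          rw [← Real.rpow_add hG]
          norm_num

lemma gautschi_lower {x s : ℝ} (hx : 0 < x) (hs0 : 0 ≤ s) (hs1 : s ≤ 1) :
    Real.Gamma x * x * (x+s) ^ (s-1) ≤ Real.Gamma (x+s) := by
  have hG : 0 < Real.Gamma x := Real.Gamma_pos_of_pos hx
  rcases eq_or_lt_of_le hs0 with h0 | h0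
  · rw [← h0, add_zero, show (0:ℝ)-1 = -1 by ring, Real.rpow_neg_one,
      mul_assoc, mul_inv_cancel₀ hx.ne', mul_one]
  rcases eq_or_lt_of_le hs1 with h1 | h1
  · subst h1
    rw [show (1:ℝ)-1 = 0 by ring, Real.rpow_zero, mul_one, Real.Gamma_add_one hx.ne',
      mul_comm]
  · have hxs : 0 < x + s := by linarith
    have hGxs : 0 < Real.Gamma (x+s) := Real.Gamma_pos_of_pos hxs
    have key := Real.Gamma_mul_add_mul_le_rpow_Gamma_mul_rpow_Gamma
      (s := x+s) (t := x+s+1) hxs (by linarith) (a := s) (b := 1-s) h0 (by linarith) (by ring)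
    rw [show s*(x+s) + (1-s)*(x+s+1) = x + 1 by ring] at key
    rw [Real.Gamma_add_one hx.ne'] at key
    have key2 : Real.Gamma (x+s) ^ s * Real.Gamma (x+s+1) ^ (1-s)
        = Real.Gamma (x+s) * (x+s) ^ (1-s) := by
      rw [Real.Gamma_add_one hxs.ne', Real.mul_rpow hxs.le hGxs.le]
      rw [show Real.Gamma (x+s) ^ s * ((x+s)^(1-s) * Real.Gamma (x+s) ^ (1-s))
          = (Real.Gamma (x+s) ^ s * Real.Gamma (x+s) ^ (1-s)) * (x+s)^(1-s) from by ring]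
      rw [← Real.rpow_add hGxs]
      norm_num
    rw [key2] at key
    have hpow : 0 < (x+s) ^ ((1:ℝ)-s) := Real.rpow_pos_of_pos hxs _
    have h3 : (x+s)^(s-1) = ((x+s)^((1:ℝ)-s))⁻¹ := by
      rw [show s-1 = -(1-s) by ring, Real.rpow_neg hxs.le]
    rw [h3, ← div_eq_mul_inv, div_le_iff₀ hpow]
    calc Real.Gamma x * x = x * Real.Gamma x := by ring
      _ ≤ Real.Gamma (x+s) * (x+s)^((1:ℝ)-s) := key

lemma le_poch {y : ℝ} (hy : 0 ≤ y) (m : ℕ) : y^m ≤ poch y m := by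
  rw [show y^m = ∏ _i ∈ range m, y from by rw [Finset.prod_const, Finset.card_range]]
  exact Finset.prod_le_prod (fun i _ => hy) (fun i _ => by
    have : (0:ℝ) ≤ i := Nat.cast_nonneg i
    linarith)

lemma poch_le' {y : ℝ} (hy : 1 ≤ y) (m : ℕ) : poch y m ≤ y^m * (m.factorial : ℝ) := by
  have h1 : poch y m ≤ ∏ i ∈ range m, (y * (1+i)) := by
    apply Finset.prod_le_prod
    · intro i _
      have : (0:ℝ) ≤ i := Nat.cast_nonneg i
      linarith
    · intro i _
      have h : (0:ℝ) ≤ i := Nat.cast_nonneg i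
      nlinarith
  have h2 : ∏ i ∈ range m, (y * (1+(i:ℝ))) = y^m * (m.factorial : ℝ) := by
    rw [Finset.prod_mul_distrib, Finset.prod_const, Finset.card_range]
    congr 1
    rw [show ∏ i ∈ range m, (1+(i:ℝ)) = ∏ i ∈ range m, (((i+1 : ℕ)):ℝ) from
      Finset.prod_congr rfl (fun i _ => by push_cast; ring)]
    rw [← Nat.cast_prod]
    exact_mod_cast congrArg (Nat.cast (R := ℝ)) (Finset.prod_range_add_one_eq_factorial m)
  linarith [h1, h2.le, h2.ge]

lemma ratio_y {d : ℝ} (hd : 0 < d) : ∃ c1 > (0:ℝ), ∃ c2 > (0:ℝ), ∀ y : ℝ, 1 ≤ y →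
    c1 * y^d ≤ Real.Gamma (y+d) / Real.Gamma y ∧
      Real.Gamma (y+d) / Real.Gamma y ≤ c2 * y^d := by
  set n := ⌈d⌉₊ with hn
  have hn1 : 1 ≤ n := Nat.ceil_pos.2 hd
  have hdn : d ≤ (n:ℝ) := Nat.le_ceil d
  have hnd : (n:ℝ) < d + 1 := by exact_mod_cast Nat.ceil_lt_add_one hd.le
  set m := n - 1 with hmdef
  have hm : (m:ℝ) = (n:ℝ) - 1 := by
    rw [hmdef]; push_cast [Nat.cast_sub hn1]; ring
  set s := d - (m:ℝ) with hs
  have hs0 : 0 < s := by rw [hs, hm]; linarith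
  have hs1 : s ≤ 1 := by rw [hs, hm]; linarith
  have hms : (m:ℝ) + s = d := by rw [hs]; ring
  have hmn : (m:ℝ) + 1 = (n:ℝ) := by rw [hm]; ring
  refine ⟨((n:ℝ)+1)⁻¹, by positivity, (m.factorial : ℝ) * n, ?_, ?_⟩
  · have h1 : 0 < (m.factorial : ℝ) := by exact_mod_cast Nat.factorial_pos m
    have h2 : (0:ℝ) < n := by exact_mod_cast hn1
    positivity
  intro y hy
  have hy0 : 0 < y := lt_of_lt_of_le one_pos hy
  have hGy : 0 < Real.Gamma y := Real.Gamma_pos_of_pos hy0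
  have hx : 0 < y + (m:ℝ) := by positivity
  have hkey : y + d = (y + (m:ℝ)) + s := by rw [hs]; ring
  have hGamx : Real.Gamma (y + (m:ℝ)) = poch y m * Real.Gamma y := Gamma_poch hy0 m
  have hpochpos : 0 < poch y m := poch_pos hy0 m
  have hyd : y ^ (m:ℕ) * y ^ s = y ^ d := by
    rw [← Real.rpow_natCast y m, ← Real.rpow_add hy0, hms]
  have hybound : y + (m:ℝ) ≤ y * n := by
    have h : (0:ℝ) ≤ (m:ℝ) := Nat.cast_nonneg m
    nlinarith [hmn]
  constructor
  · -- lower bound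
    have hlow := gautschi_lower hx hs0.le hs1
    rw [← hkey, hGamx] at hlow
    -- hlow : poch y m * Γ y * (y+m) * ((y+m)+s)^(s-1) ≤ Γ (y+d)
    have hb1 : y ^ (m:ℕ) ≤ poch y m := le_poch hy0.le m
    have hb2 : y ≤ y + (m:ℝ) := by have : (0:ℝ) ≤ (m:ℝ) := Nat.cast_nonneg m; linarith
    have hb3 : y * ((n:ℝ)+1) > 0 := by
      have h2 : (0:ℝ) < n := by exact_mod_cast hn1
      positivity
    have hb4 : y + d ≤ y * ((n:ℝ)+1) := by rw [hkey]; nlinarith [hybound]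
    have hb5 : (y * ((n:ℝ)+1)) ^ (s-1) ≤ (y + d) ^ (s-1) :=
      rpow_le_rpow_nonpos (by positivity) hb4 (by linarith)
    have hb6 : y ^ (s-1) * ((n:ℝ)+1)⁻¹ ≤ (y * ((n:ℝ)+1)) ^ (s-1) := by
      rw [Real.mul_rpow hy0.le (by positivity : (0:ℝ) ≤ (n:ℝ)+1)]
      apply mul_le_mul_of_nonneg_left _ (Real.rpow_nonneg hy0.le _)
      calc ((n:ℝ)+1)⁻¹ = ((n:ℝ)+1) ^ (-1 : ℝ) := (Real.rpow_neg_one _).symm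
        _ ≤ ((n:ℝ)+1) ^ (s-1) := by
            apply Real.rpow_le_rpow_of_exponent_le _ (by linarith)
            have h2 : (0:ℝ) < n := by exact_mod_cast hn1
            linarith
    have step : ((n:ℝ)+1)⁻¹ * y ^ d * Real.Gamma y
        ≤ poch y m * Real.Gamma y * (y + (m:ℝ)) * (y + d) ^ (s-1) := by
      calc ((n:ℝ)+1)⁻¹ * y ^ d * Real.Gamma y
          = (y ^ (m:ℕ)) * Real.Gamma y * y * (y ^ (s-1) * ((n:ℝ)+1)⁻¹) := by
            have hsplit : y ^ s = y * y ^ (s-1) := by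
              rw [show y * y^(s-1) = y^((1:ℝ)+(s-1)) from by
                  rw [Real.rpow_add hy0, Real.rpow_one],
                show (1:ℝ)+(s-1) = s by ring]
            rw [← hyd, hsplit]
            ring
        _ ≤ poch y m * Real.Gamma y * (y + (m:ℝ)) * (y + d) ^ (s-1) := by
            have e1 : (0:ℝ) < (y + d) ^ (s-1) := Real.rpow_pos_of_pos (by linarith) _
            apply mul_le_mul
            · apply mul_le_mul
              · exact mul_le_mul_of_nonneg_right hb1 hGy.le
              · exact hb2
              · exact hy0.le
              · positivity
            · exact le_trans hb6 hb5
            · positivity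
            · positivity
    rw [le_div_iff₀ hGy]
    calc ((n:ℝ)+1)⁻¹ * y ^ d * Real.Gamma y
        ≤ poch y m * Real.Gamma y * (y + (m:ℝ)) * (y + d) ^ (s-1) := step
      _ ≤ Real.Gamma (y + d) := hlow
  · -- upper bound
    have hup := gautschi_upper hx hs0.le hs1
    rw [← hkey, hGamx] at hup
    have hb1 : poch y m ≤ y ^ (m:ℕ) * (m.factorial : ℝ) := poch_le' hy m
    have hb2 : (y + (m:ℝ)) ^ s ≤ y ^ s * (n:ℝ) := by
      calc (y + (m:ℝ)) ^ s ≤ (y * n) ^ s := by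
            apply Real.rpow_le_rpow hx.le hybound hs0.le
        _ = y ^ s * (n:ℝ) ^ s := Real.mul_rpow hy0.le (by positivity)
        _ ≤ y ^ s * (n:ℝ) := by
            apply mul_le_mul_of_nonneg_left _ (Real.rpow_nonneg hy0.le _)
            calc (n:ℝ) ^ s ≤ (n:ℝ) ^ (1:ℝ) := by
                  apply Real.rpow_le_rpow_of_exponent_le _ hs1
                  exact_mod_cast hn1
              _ = (n:ℝ) := Real.rpow_one _
    rw [div_le_iff₀ hGy]
    calc Real.Gamma (y + d)
        ≤ poch y m * Real.Gamma y * (y + (m:ℝ)) ^ s := hup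
      _ ≤ (y ^ (m:ℕ) * (m.factorial : ℝ)) * Real.Gamma y * (y ^ s * (n:ℝ)) := by
          apply mul_le_mul
          · exact mul_le_mul_of_nonneg_right hb1 hGy.le
          · exact hb2
          · positivity
          · positivity
      _ = (m.factorial : ℝ) * (n:ℝ) * y ^ d * Real.Gamma y := by
          rw [← hyd]; ring

include hα hαβ hσ in
lemma integrand0_eq : ∀ θ ∈ Ioo (0:ℝ) Real.pi,
    (2*Real.cos (θ/2)^(2:ℕ))^ρ * jacobiWeight α β θ
      = (Real.sin (θ/2) * Real.cos (θ/2)) *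
          ((2*(1-Real.sin (θ/2)^2))^ρ *
            ((Real.sin (θ/2)^2)^α * (1-Real.sin (θ/2)^2)^β)) := by
  intro θ hθ
  have hs : 0 < Real.sin (θ/2) :=
    Real.sin_pos_of_pos_of_lt_pi (by linarith [hθ.1]) (by linarith [hθ.2, Real.pi_pos])
  have hc : 0 < Real.cos (θ/2) :=
    Real.cos_pos_of_mem_Ioo ⟨by linarith [hθ.1, Real.pi_pos], by linarith [hθ.2]⟩
  have hsq := Real.sin_sq_add_cos_sq (θ/2)
  have hc2 : 1 - Real.sin (θ/2)^2 = Real.cos (θ/2)^2 := by linarith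
  have w1 : Real.sin (θ/2) ^ (2*α+1) = (Real.sin (θ/2)^(2:ℕ))^α * Real.sin (θ/2) := by
    rw [Real.rpow_add hs, Real.rpow_one]
    congr 1
    rw [← Real.rpow_natCast (Real.sin (θ/2)) 2, ← Real.rpow_mul hs.le]
    norm_num
  have w2 : Real.cos (θ/2) ^ (2*β+1) = (Real.cos (θ/2)^(2:ℕ))^β * Real.cos (θ/2) := by
    rw [Real.rpow_add hc, Real.rpow_one]
    congr 1
    rw [← Real.rpow_natCast (Real.cos (θ/2)) 2, ← Real.rpow_mul hc.le]
    norm_num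
  rw [jacobiWeight, w1, w2, hc2]
  ring

include hα hαβ hσ in
lemma G0_int : IntegrableOn (fun x : ℝ => (2*(1-x))^ρ * ((x:ℝ)^α * (1-x)^β))
    (Ioo (0:ℝ) 1) := by
  have base : IntegrableOn (fun x : ℝ => (2:ℝ)^ρ * ((x:ℝ)^α * (1-x)^(β+ρ))) (Ioo (0:ℝ) 1) :=
    (betaReal_integrable' hα (by linarith)).const_mul _
  apply (integrableOn_congr_fun ?_ measurableSet_Ioo).2 base
  intro x hx
  have hx0 : 0 < x := hx.1
  have h1x : 0 < 1 - x := by linarith [hx.2]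
  simp only
  rw [Real.mul_rpow (by norm_num : (0:ℝ) ≤ 2) h1x.le, Real.rpow_add h1x β ρ]
  ring

include hα hαβ hσ in
lemma memL : MemJacobiL α β (fun θ => (2 * Real.cos (θ / 2) ^ (2 : ℕ)) ^ ρ) := by
  rw [MemJacobiL, IntegrableOn, ← Measure.restrict_congr_set Ioo_ae_eq_Ioc]
  have h2 := (covIntegrable (fun x => (2*(1-x))^ρ * ((x:ℝ)^α * (1-x)^β))).1
    (G0_int hα hαβ hσ)
  exact (integrableOn_congr_fun (integrand0_eq hα hαβ hσ) measurableSet_Ioo).2 h2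

end Main


/-- For `β > α > -1` and `0 < β + ρ + 1 < (β - α)/2`, the function
`f(θ) = (2 cos²(θ/2))^ρ` belongs to `L_{(α,β)}`, its Fourier–Jacobi coefficients
satisfy the two-sided estimate `|f̂_{(α,β)}(k)| ≈ (k+1)^{-2ρ-α-β-2}`, and they
tend to `∞` as `k → ∞`. -/
theorem jacobi_coeff_counterexample (α β ρ : ℝ) (hα : -1 < α) (hαβ : α < β)
    (hρ : 0 < β + ρ + 1) (hρ' : β + ρ + 1 < (β - α) / 2) :
    MemJacobiL α β (fun θ => (2 * Real.cos (θ / 2) ^ (2 : ℕ)) ^ ρ) ∧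
    (∃ C > (0 : ℝ), ∃ C' > (0 : ℝ), ∀ k : ℕ,
      C' * ((k : ℝ) + 1) ^ (-(2 * ρ) - α - β - 2)
          ≤ |fourierJacobi α β (fun θ => (2 * Real.cos (θ / 2) ^ (2 : ℕ)) ^ ρ) k| ∧
      |fourierJacobi α β (fun θ => (2 * Real.cos (θ / 2) ^ (2 : ℕ)) ^ ρ) k|
          ≤ C * ((k : ℝ) + 1) ^ (-(2 * ρ) - α - β - 2)) ∧
    Tendsto (fun k : ℕ =>
        |fourierJacobi α β (fun θ => (2 * Real.cos (θ / 2) ^ (2 : ℕ)) ^ ρ) k|)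
      atTop atTop := by
  have hβ : -1 < β := by linarith
  have hρneg : ρ < 0 := by linarith
  set E : ℝ := -(2 * ρ) - α - β - 2 with hE
  set B : ℝ := α + β + ρ + 2 with hB
  have hBpos : 0 < B := by rw [hB]; linarith
  have hEpos : 0 < E := by rw [hE]; linarith
  have hGσ : 0 < Real.Gamma (β+ρ+1) := Real.Gamma_pos_of_pos hρ
  have hGα : 0 < Real.Gamma (α+1) := Real.Gamma_pos_of_pos (by linarith)
  have hGρ : 0 < Real.Gamma (-ρ) := Real.Gamma_pos_of_pos (by linarith)
  set K0 : ℝ := 2^ρ * Real.Gamma (β+ρ+1) * Real.Gamma (α+1) / Real.Gamma (-ρ) with hK0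
  have hK0pos : 0 < K0 := by
    rw [hK0]
    have h2 : (0:ℝ) < 2^ρ := Real.rpow_pos_of_pos (by norm_num) ρ
    positivity
  have habs : ∀ k : ℕ,
      |fourierJacobi α β (fun θ => (2 * Real.cos (θ / 2) ^ (2 : ℕ)) ^ ρ) k|
        = K0 * (Real.Gamma (((k:ℝ) + B) + E) / Real.Gamma ((k:ℝ) + B)) := by
    intro k
    rw [coefVal hα hαβ hρ k]
    have hpochpos : 0 < poch (-ρ) k := poch_pos (by linarith) k
    have hGD : 0 < Real.Gamma (α+β+ρ+(k:ℝ)+2) :=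
      Real.Gamma_pos_of_pos (by have := Nat.cast_nonneg (α := ℝ) k; linarith)
    have h2 : (0:ℝ) < 2^ρ := Real.rpow_pos_of_pos (by norm_num) ρ
    have hpos : 0 < 2^ρ * Real.Gamma (β+ρ+1) * Real.Gamma (α+1) * poch (-ρ) k
        / Real.Gamma (α+β+ρ+(k:ℝ)+2) := by positivity
    rw [show (-1:ℝ)^k * 2^ρ * Real.Gamma (β+ρ+1) * Real.Gamma (α+1) * poch (-ρ) k
        / Real.Gamma (α+β+ρ+(k:ℝ)+2)
        = (-1:ℝ)^k * (2^ρ * Real.Gamma (β+ρ+1) * Real.Gamma (α+1) * poch (-ρ) k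
            / Real.Gamma (α+β+ρ+(k:ℝ)+2)) from by ring]
    rw [abs_mul, abs_pow, abs_neg, abs_one, one_pow, one_mul, abs_of_pos hpos]
    have hpochval : Real.Gamma (-ρ + (k:ℝ)) = poch (-ρ) k * Real.Gamma (-ρ) :=
      Gamma_poch (by linarith) k
    rw [show ((k:ℝ) + B) + E = -ρ + (k:ℝ) from by rw [hB, hE]; ring,
      show (k:ℝ) + B = α+β+ρ+(k:ℝ)+2 from by rw [hB]; ring, hK0, hpochval]
    field_simp
  obtain ⟨c1, hc1, c2, hc2, hbnd⟩ := ratio_y hEpos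
  set nb : ℝ := min 1 B with hnb
  set mb : ℝ := max 1 B with hmb
  have hnbpos : 0 < nb := lt_min one_pos hBpos
  have hmbpos : 0 < mb := lt_of_lt_of_le one_pos (le_max_left _ _)
  set V0 : ℝ := K0 * (Real.Gamma (((0:ℝ) + B) + E) / Real.Gamma ((0:ℝ) + B)) with hV0
  have hV0pos : 0 < V0 := by
    rw [hV0]
    have g1 : 0 < Real.Gamma (((0:ℝ) + B) + E) := Real.Gamma_pos_of_pos (by linarith)
    have g2 : 0 < Real.Gamma ((0:ℝ) + B) := Real.Gamma_pos_of_pos (by linarith)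
    positivity
  have hcore : ∀ k : ℕ, 1 ≤ k →
      K0 * c1 * nb ^ E * ((k:ℝ)+1) ^ E
          ≤ |fourierJacobi α β (fun θ => (2 * Real.cos (θ / 2) ^ (2 : ℕ)) ^ ρ) k| ∧
        |fourierJacobi α β (fun θ => (2 * Real.cos (θ / 2) ^ (2 : ℕ)) ^ ρ) k|
          ≤ K0 * c2 * mb ^ E * ((k:ℝ)+1) ^ E := by
    intro k hk
    have hk1 : (1:ℝ) ≤ (k:ℝ) := by exact_mod_cast hk
    have hy1 : 1 ≤ (k:ℝ) + B := by linarith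
    have hy0 : 0 < (k:ℝ) + B := by linarith
    obtain ⟨hlow, hup⟩ := hbnd ((k:ℝ) + B) hy1
    have hk1' : (0:ℝ) < (k:ℝ) + 1 := by linarith
    have hyl : nb * ((k:ℝ)+1) ≤ (k:ℝ) + B := by
      have h1 : nb ≤ 1 := min_le_left _ _
      have h2 : nb ≤ B := min_le_right _ _
      nlinarith
    have hyu : (k:ℝ) + B ≤ mb * ((k:ℝ)+1) := by
      have h1 : 1 ≤ mb := le_max_left _ _
      have h2 : B ≤ mb := le_max_right _ _
      nlinarith
    have hpl : nb ^ E * ((k:ℝ)+1) ^ E ≤ ((k:ℝ) + B) ^ E := by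
      rw [← Real.mul_rpow hnbpos.le hk1'.le]
      exact Real.rpow_le_rpow (by positivity) hyl hEpos.le
    have hpu : ((k:ℝ) + B) ^ E ≤ mb ^ E * ((k:ℝ)+1) ^ E := by
      rw [← Real.mul_rpow hmbpos.le hk1'.le]
      exact Real.rpow_le_rpow hy0.le hyu hEpos.le
    rw [habs k]
    constructor
    · calc K0 * c1 * nb ^ E * ((k:ℝ)+1) ^ E
          = K0 * (c1 * (nb ^ E * ((k:ℝ)+1) ^ E)) := by ring
        _ ≤ K0 * (c1 * ((k:ℝ)+B) ^ E) := by
            apply mul_le_mul_of_nonneg_left _ hK0pos.le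
            exact mul_le_mul_of_nonneg_left hpl hc1.le
        _ ≤ K0 * (Real.Gamma (((k:ℝ) + B) + E) / Real.Gamma ((k:ℝ) + B)) :=
            mul_le_mul_of_nonneg_left hlow hK0pos.le
    · calc K0 * (Real.Gamma (((k:ℝ) + B) + E) / Real.Gamma ((k:ℝ) + B))
          ≤ K0 * (c2 * ((k:ℝ)+B) ^ E) := mul_le_mul_of_nonneg_left hup hK0pos.le
        _ ≤ K0 * (c2 * (mb ^ E * ((k:ℝ)+1) ^ E)) := by
            apply mul_le_mul_of_nonneg_left _ hK0pos.le
            exact mul_le_mul_of_nonneg_left hpu hc2.le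
        _ = K0 * c2 * mb ^ E * ((k:ℝ)+1) ^ E := by ring
  set C : ℝ := max (K0 * c2 * mb ^ E) V0 with hC
  set C' : ℝ := min (K0 * c1 * nb ^ E) V0 with hC'
  have hCpos : 0 < C := lt_of_lt_of_le hV0pos (le_max_right _ _)
  have hC'pos : 0 < C' := by
    apply lt_min _ hV0pos
    have := Real.rpow_pos_of_pos hnbpos E
    positivity
  have hmain : ∀ k : ℕ,
      C' * ((k : ℝ) + 1) ^ E
          ≤ |fourierJacobi α β (fun θ => (2 * Real.cos (θ / 2) ^ (2 : ℕ)) ^ ρ) k| ∧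
      |fourierJacobi α β (fun θ => (2 * Real.cos (θ / 2) ^ (2 : ℕ)) ^ ρ) k|
          ≤ C * ((k : ℝ) + 1) ^ E := by
    intro k
    rcases Nat.eq_zero_or_pos k with hk0 | hk1
    · subst hk0
      rw [habs 0]
      simp only [Nat.cast_zero]
      rw [show ((0:ℝ) + 1) = 1 from by norm_num, Real.one_rpow, mul_one, mul_one]
      exact ⟨min_le_right _ _, le_max_right _ _⟩
    · obtain ⟨h1, h2⟩ := hcore k hk1
      constructor
      · calc C' * ((k:ℝ)+1) ^ E ≤ K0 * c1 * nb ^ E * ((k:ℝ)+1) ^ E :=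
              mul_le_mul_of_nonneg_right (min_le_left _ _) (by positivity)
          _ ≤ _ := h1
      · calc |fourierJacobi α β (fun θ => (2 * Real.cos (θ / 2) ^ (2 : ℕ)) ^ ρ) k|
            ≤ K0 * c2 * mb ^ E * ((k:ℝ)+1) ^ E := h2
          _ ≤ C * ((k:ℝ)+1) ^ E :=
              mul_le_mul_of_nonneg_right (le_max_left _ _) (by positivity)
  refine ⟨memL hα hαβ hρ, ⟨C, hCpos, C', hC'pos, hmain⟩, ?_⟩
  have htend : Filter.Tendsto (fun k : ℕ => C' * ((k:ℝ)+1) ^ E) Filter.atTop Filter.atTop := by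
    apply Filter.Tendsto.const_mul_atTop hC'pos
    apply (tendsto_rpow_atTop hEpos).comp
    exact Filter.tendsto_atTop_add_const_right _ _ tendsto_natCast_atTop_atTop
  apply Filter.tendsto_atTop_mono (fun k => (hmain k).1) htend
end

section
/- Let α > -1/2 be a real number. Then there exists a constant C > 0 such that for all θ with 0 < θ ≤ π/2, h(θ) := (sin θ)^{-2α} ∫_0^θ (cos φ - cos θ)^{α - 1/2} dφ ≤ C. -/
open MeasureTheory Filter Set

/-! For `0 ≤ φ ≤ θ ≤ π/2`, the factorisation
`cos φ - cos θ = 2 sin ((θ + φ)/2) sin ((θ - φ)/2)` together with `(2/π) x ≤ sin x ≤ x` shows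
`cos φ - cos θ ≍ θ (θ - φ)`, and likewise `sin θ ≍ θ`. Raising comparable quantities to a real
power `γ` of either sign costs only a constant factor, so with `β = α - 1/2` the function is
`≲ θ^(-2α) θ^β ∫₀^θ (θ - φ)^β dφ = θ^(-2α) θ^(2β+1) / (β + 1)`, and the powers of `θ` cancel. -/

namespace Real

lemma rpow_le_max_mul_rpow {x y c : ℝ} (γ : ℝ) (hc : 0 < c) (hy : 0 ≤ y) (hlo : c * y ≤ x)
    (hhi : x ≤ y) : x ^ γ ≤ max (c ^ γ) 1 * y ^ γ := by
  rcases hy.eq_or_lt with rfl | hy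
  · obtain rfl : x = 0 := by linarith
    exact le_mul_of_one_le_left (rpow_nonneg le_rfl γ) (le_max_right _ _)
  have hcy : 0 < c * y := mul_pos hc hy
  rcases le_total 0 γ with hγ | hγ
  · calc x ^ γ ≤ y ^ γ := rpow_le_rpow (hcy.le.trans hlo) hhi hγ
      _ ≤ max (c ^ γ) 1 * y ^ γ :=
        le_mul_of_one_le_left (rpow_nonneg hy.le γ) (le_max_right _ _)
  · calc x ^ γ ≤ (c * y) ^ γ := rpow_le_rpow_of_nonpos hcy hlo hγ
      _ = c ^ γ * y ^ γ := mul_rpow hc.le hy.le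
      _ ≤ max (c ^ γ) 1 * y ^ γ := by gcongr; exact le_max_left _ _

variable {φ θ : ℝ}

lemma cos_sub_cos_eq_two_mul_sin_mul_sin (φ θ : ℝ) :
    cos φ - cos θ = 2 * sin ((θ + φ) / 2) * sin ((θ - φ) / 2) := by
  rw [cos_sub_cos, show (φ - θ) / 2 = -((θ - φ) / 2) by ring, sin_neg, add_comm]
  ring

lemma cos_sub_cos_le_mul_sub (hφ : 0 ≤ φ) (hφθ : φ ≤ θ) : cos φ - cos θ ≤ θ * (θ - φ) := by
  have hs : |sin ((θ + φ) / 2)| ≤ (θ + φ) / 2 :=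
    abs_sin_le_abs.trans_eq (abs_of_nonneg (by linarith))
  have hd : |sin ((θ - φ) / 2)| ≤ (θ - φ) / 2 :=
    abs_sin_le_abs.trans_eq (abs_of_nonneg (by linarith))
  calc cos φ - cos θ ≤ 2 * (|sin ((θ + φ) / 2)| * |sin ((θ - φ) / 2)|) := by
        rw [cos_sub_cos_eq_two_mul_sin_mul_sin, mul_assoc, ← abs_mul]
        exact mul_le_mul_of_nonneg_left (le_abs_self _) zero_le_two
    _ ≤ 2 * ((θ + φ) / 2 * ((θ - φ) / 2)) := by gcongr; linarith
    _ ≤ θ * (θ - φ) := by nlinarith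

lemma mul_le_cos_sub_cos (hφ : 0 ≤ φ) (hφθ : φ ≤ θ) (hθ : θ ≤ π / 2) :
    2 / π ^ 2 * (θ * (θ - φ)) ≤ cos φ - cos θ := by
  have hs : 2 / π * ((θ + φ) / 2) ≤ sin ((θ + φ) / 2) := mul_le_sin (by linarith) (by linarith)
  have hd : 2 / π * ((θ - φ) / 2) ≤ sin ((θ - φ) / 2) := mul_le_sin (by linarith) (by linarith)
  have hs0 : 0 ≤ 2 / π * ((θ + φ) / 2) := mul_nonneg (by positivity) (by linarith)
  have hd0 : 0 ≤ 2 / π * ((θ - φ) / 2) := mul_nonneg (by positivity) (by linarith)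
  calc 2 / π ^ 2 * (θ * (θ - φ)) ≤ 2 / π ^ 2 * ((θ + φ) * (θ - φ)) := by gcongr; nlinarith
    _ = 2 * (2 / π * ((θ + φ) / 2) * (2 / π * ((θ - φ) / 2))) := by ring
    _ ≤ 2 * (sin ((θ + φ) / 2) * sin ((θ - φ) / 2)) := by gcongr; exact hs0.trans hs
    _ = cos φ - cos θ := by rw [cos_sub_cos_eq_two_mul_sin_mul_sin]; ring

lemma sin_rpow_le_mul_rpow (γ : ℝ) (hθ : 0 < θ) (hθ' : θ ≤ π / 2) :
    sin θ ^ γ ≤ max ((2 / π) ^ γ) 1 * θ ^ γ :=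
  rpow_le_max_mul_rpow γ (by positivity) hθ.le (mul_le_sin hθ.le hθ') (sin_le hθ.le)

end Real

namespace intervalIntegral

open Real

variable {β : ℝ}

lemma integral_sub_rpow (θ : ℝ) (hβ : -1 < β) :
    ∫ φ in (0 : ℝ)..θ, (θ - φ) ^ β = θ ^ (β + 1) / (β + 1) := by
  rw [integral_comp_sub_left (fun x ↦ x ^ β), sub_self, sub_zero, integral_rpow (.inl hβ),
    zero_rpow (by linarith), sub_zero]

lemma intervalIntegrable_sub_rpow (θ : ℝ) (hβ : -1 < β) :
    IntervalIntegrable (fun φ ↦ (θ - φ) ^ β) volume 0 θ := by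
  simpa using ((intervalIntegrable_rpow' hβ (a := 0) (b := θ)).comp_sub_left θ).symm

lemma integral_cos_sub_cos_rpow_le {θ : ℝ} (hβ : -1 < β) (hθ : 0 < θ) (hθ' : θ ≤ π / 2) :
    ∫ φ in (0 : ℝ)..θ, (cos φ - cos θ) ^ β ≤
      max ((2 / π ^ 2) ^ β) 1 / (β + 1) * θ ^ (2 * β + 1) := by
  set M := max ((2 / π ^ 2) ^ β) 1
  have hbound : ∀ φ ∈ Ioc 0 θ, (cos φ - cos θ) ^ β ≤ M * θ ^ β * (θ - φ) ^ β := fun φ hφ ↦ by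
    rw [mul_assoc, ← mul_rpow hθ.le (by linarith [hφ.2])]
    exact rpow_le_max_mul_rpow β (by positivity) (mul_nonneg hθ.le (by linarith [hφ.2]))
      (mul_le_cos_sub_cos hφ.1.le hφ.2 hθ') (cos_sub_cos_le_mul_sub hφ.1.le hφ.2)
  have hnonneg : ∀ φ ∈ Ioc 0 θ, 0 ≤ (cos φ - cos θ) ^ β := fun φ hφ ↦
    rpow_nonneg (sub_nonneg.2 (cos_le_cos_of_nonneg_of_le_pi hφ.1.le (by linarith) hφ.2)) β
  -- `integral_mono_of_nonneg` needs no integrability of the integrand, singular at `θ` if `β < 0`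
  calc ∫ φ in (0 : ℝ)..θ, (cos φ - cos θ) ^ β ≤ ∫ φ in (0 : ℝ)..θ, M * θ ^ β * (θ - φ) ^ β := by
        simp only [integral_of_le hθ.le]
        exact integral_mono_of_nonneg (ae_restrict_of_forall_mem measurableSet_Ioc hnonneg)
          ((intervalIntegrable_sub_rpow θ hβ).const_mul _).1
          (ae_restrict_of_forall_mem measurableSet_Ioc hbound)
    _ = M / (β + 1) * θ ^ (2 * β + 1) := by
        rw [integral_const_mul, integral_sub_rpow θ hβ, show 2 * β + 1 = β + (β + 1) by ring,
          rpow_add hθ β (β + 1)]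
        ring

end intervalIntegral

open Real intervalIntegral in
/-- For `α > -1/2`, the function
`h(θ) = (sin θ)^{-2α} ∫_0^θ (cos φ - cos θ)^{α-1/2} dφ` is bounded on `(0, π/2]`. -/
theorem dirichlet_mehler_kernel_bounded (α : ℝ) (hα : -(1/2) < α) :
    ∃ C > (0 : ℝ), ∀ θ : ℝ, 0 < θ → θ ≤ Real.pi / 2 →
      Real.sin θ ^ (-(2 * α)) *
        (∫ φ in (0 : ℝ)..θ, (Real.cos φ - Real.cos θ) ^ (α - 1/2)) ≤ C := by
  set K := max ((2 / π) ^ (-(2 * α))) 1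
  set M := max ((2 / π ^ 2) ^ (α - 1 / 2)) 1
  have hβ : -1 < α - 1 / 2 := by linarith
  have hβ1 : 0 < α - 1 / 2 + 1 := by linarith
  refine ⟨K * M / (α - 1 / 2 + 1), by positivity, fun θ hθ hθ' ↦ ?_⟩
  have hint : 0 ≤ ∫ φ in (0 : ℝ)..θ, (cos φ - cos θ) ^ (α - 1 / 2) :=
    integral_nonneg hθ.le fun φ hφ ↦
      rpow_nonneg (sub_nonneg.2 (cos_le_cos_of_nonneg_of_le_pi hφ.1 (by linarith) hφ.2)) _
  calc sin θ ^ (-(2 * α)) * ∫ φ in (0 : ℝ)..θ, (cos φ - cos θ) ^ (α - 1 / 2)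
      ≤ K * θ ^ (-(2 * α)) * (M / (α - 1 / 2 + 1) * θ ^ (2 * (α - 1 / 2) + 1)) :=
        mul_le_mul (sin_rpow_le_mul_rpow _ hθ hθ') (integral_cos_sub_cos_rpow_le hβ hθ hθ') hint
          (by positivity)
    _ = K * M / (α - 1 / 2 + 1) * θ ^ (-(2 * α) + (2 * (α - 1 / 2) + 1)) := by
        rw [rpow_add hθ (-(2 * α))]; ring
    _ = K * M / (α - 1 / 2 + 1) := by
        rw [show -(2 * α) + (2 * (α - 1 / 2) + 1) = 0 by ring, rpow_zero, mul_one]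
end

section
/- Let α > -1/2 and β > -1 be real numbers and let f ∈ L_{(α,β)}. Define g(φ) = (cos(φ/2))^{-α-β} ∫_φ^{π/2} f(θ) (cos φ - cos θ)^{α-1/2} sin(θ/2) (cos(θ/2))^{2β+1} ₂F₁[(α+β+1)/2, (α+β)/2; α+1/2; (cos φ - cos θ)/(1 + cos φ)] dθ for 0 < φ < π/2. Then g is integrable on [0, π/2], and there is a constant C depending only on α and β such that ∫_0^{π/2} |g(φ)| dφ ≤ C ‖f‖_{L_{(α,β)}}. -/
noncomputable section

/-- The Gauss hypergeometric series `₂F₁[a, b; c; x] = Σ_n (a)_n (b)_n / ((c)_n n!) x^n`. -/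
def gauss2F1 (a b c x : ℝ) : ℝ :=
  ∑' n : ℕ, ((ascPochhammer ℝ n).eval a * (ascPochhammer ℝ n).eval b) /
    ((ascPochhammer ℝ n).eval c * (Nat.factorial n : ℝ)) * x ^ n

end

open MeasureTheory Filter Set

/-- The function `g(φ)` obtained from `f` by inserting the Dirichlet–Mehler type
integral representation and interchanging the order of integration. -/
noncomputable def gDirichletMehler (α β : ℝ) (f : ℝ → ℝ) (φ : ℝ) : ℝ :=
  Real.cos (φ / 2) ^ (-α - β) *
    ∫ θ in Ioc φ (Real.pi / 2),
      f θ * (Real.cos φ - Real.cos θ) ^ (α - 1/2) * Real.sin (θ / 2) *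
        Real.cos (θ / 2) ^ (2 * β + 1) *
        gauss2F1 ((α + β + 1) / 2) ((α + β) / 2) (α + 1/2)
          ((Real.cos φ - Real.cos θ) / (1 + Real.cos φ))


namespace GDMaux

open Topology ENNReal

lemma measurable_tsum_real {u : ℕ → ℝ → ℝ} (hu : ∀ n, Measurable (u n)) :
    Measurable fun x => ∑' n, u n x := by
  classical
  set S : Set ℝ := {x | Summable fun n => u n x} with hSdef
  have hSm : MeasurableSet S := by
    have hset : S = {x | (∑' n, (‖u n x‖₊ : ℝ≥0∞)) < ∞} := by
      ext x
      simp only [hSdef, mem_setOf_eq, lt_top_iff_ne_top,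
        ENNReal.tsum_coe_ne_top_iff_summable]
      rw [← NNReal.summable_coe]
      simp only [coe_nnnorm, Real.norm_eq_abs]
      exact (summable_abs_iff).symm
    rw [hset]
    exact measurableSet_lt
      (Measurable.ennreal_tsum fun n => ((hu n).nnnorm.coe_nnreal_ennreal)) measurable_const
  have hv : ∀ N : ℕ, Measurable (S.piecewise
      (fun x => ∑ n ∈ Finset.range N, u n x) (fun _ => (0:ℝ))) := fun N =>
    Measurable.piecewise hSm (Finset.measurable_sum _ fun n _ => hu n) measurable_const
  apply measurable_of_tendsto_metrizable hv
  rw [tendsto_pi_nhds]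
  intro x
  by_cases hx : x ∈ S
  · have := (hx : Summable fun n => u n x).hasSum.tendsto_sum_nat
    refine this.congr fun N => ?_
    rw [Set.piecewise_eq_of_mem _ _ _ hx]
  · have : (fun N => S.piecewise (fun x => ∑ n ∈ Finset.range N, u n x) (fun _ => (0:ℝ)) x)
        = fun _ => (0:ℝ) := by
      funext N; rw [Set.piecewise_eq_of_notMem _ _ _ hx]
    rw [this, tsum_eq_zero_of_not_summable hx]
    exact tendsto_const_nhds

lemma measurable_gauss2F1 (a b c : ℝ) : Measurable (gauss2F1 a b c) :=
  measurable_tsum_real fun n => (measurable_const.mul (measurable_id.pow_const n))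

lemma abs_ascPochhammer_le (a : ℝ) : ∀ n : ℕ,
    |(ascPochhammer ℝ n).eval a| ≤ (ascPochhammer ℝ n).eval (|a| + 1)
  | 0 => by simp
  | (n+1) => by
    rw [ascPochhammer_succ_eval, ascPochhammer_succ_eval, abs_mul]
    have h1 := abs_ascPochhammer_le a n
    have h2 : |a + n| ≤ |a| + 1 + n := by
      have := abs_add_le a (n : ℝ)
      simp only [Nat.abs_cast] at this
      linarith
    exact mul_le_mul h1 h2 (abs_nonneg _) (le_trans (abs_nonneg _) h1)

lemma tendsto_ratio (x y : ℝ) :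
    Tendsto (fun n : ℕ => (x + n) / (y + n)) atTop (𝓝 1) := by
  have h1 : Tendsto (fun n : ℕ => (y : ℝ) + n) atTop atTop :=
    tendsto_atTop_add_const_left _ _ tendsto_natCast_atTop_atTop
  have h2 : Tendsto (fun n : ℕ => (x - y) / (y + n)) atTop (𝓝 0) :=
    Tendsto.div_atTop tendsto_const_nhds h1
  have h3 : Tendsto (fun n : ℕ => 1 + (x - y) / (y + n)) atTop (𝓝 1) := by
    simpa using h2.const_add 1
  refine Tendsto.congr' ?_ h3
  filter_upwards [h1.eventually_gt_atTop 0] with n hn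
  field_simp
  ring

lemma gauss2F1_bound (a b c : ℝ) (hc : 0 < c) :
    ∃ M : ℝ, 0 < M ∧ ∀ x : ℝ, 0 ≤ x → x ≤ 1/2 → |gauss2F1 a b c x| ≤ M := by
  set A : ℝ := |a| + 1 with hAdef
  set B : ℝ := |b| + 1 with hBdef
  have hA : 0 < A := by positivity
  have hB : 0 < B := by positivity
  set w : ℕ → ℝ := fun n => ((ascPochhammer ℝ n).eval A * (ascPochhammer ℝ n).eval B) /
      ((ascPochhammer ℝ n).eval c * (Nat.factorial n : ℝ)) * (1/2)^n with hwdef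
  have hposA : ∀ n, 0 < (ascPochhammer ℝ n).eval A := fun n => ascPochhammer_pos n A hA
  have hposB : ∀ n, 0 < (ascPochhammer ℝ n).eval B := fun n => ascPochhammer_pos n B hB
  have hposc : ∀ n, 0 < (ascPochhammer ℝ n).eval c := fun n => ascPochhammer_pos n c hc
  have hfac : ∀ n : ℕ, (0:ℝ) < (Nat.factorial n : ℝ) := fun n => by
    exact_mod_cast Nat.factorial_pos n
  have hw : ∀ n, 0 < w n := fun n => by
    apply mul_pos (div_pos (mul_pos (hposA n) (hposB n)) (mul_pos (hposc n) (hfac n)))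
    positivity
  have hrec : ∀ n : ℕ, w (n+1) = w n * ((A + n)/(c + n) * ((B + n)/(1 + n)) * (1/2)) := by
    intro n
    have hcn : (0:ℝ) < c + n := by positivity
    have hn1 : (0:ℝ) < 1 + (n:ℝ) := by positivity
    simp only [hwdef, ascPochhammer_succ_eval, Nat.factorial_succ, Nat.cast_mul, pow_succ]
    rw [Nat.cast_add, Nat.cast_one]
    field_simp
    ring
  have htend : Tendsto (fun n : ℕ => (A + n)/(c + n) * ((B + n)/(1 + n)) * (1/2)) atTop
      (𝓝 (1/2)) := by
    have := ((tendsto_ratio A c).mul (tendsto_ratio B 1)).mul_const (1/2 : ℝ)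
    simpa using this
  have hev : ∀ᶠ n in atTop, ‖w (n+1)‖ ≤ (3/4) * ‖w n‖ := by
    filter_upwards [htend.eventually_le_const (by norm_num : (1/2:ℝ) < 3/4)] with n hn
    have hn0 : (0:ℝ) ≤ (n:ℝ) := Nat.cast_nonneg n
    have hr0 : 0 ≤ (A + n)/(c + n) * ((B + n)/(1 + n)) * (1/2) := by
      apply mul_nonneg (mul_nonneg (div_nonneg (by linarith) (by linarith))
        (div_nonneg (by linarith) (by linarith)))
      norm_num
    rw [hrec n, Real.norm_eq_abs, Real.norm_eq_abs, abs_mul, abs_of_pos (hw n),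
      abs_of_nonneg hr0]
    calc w n * ((A + n)/(c + n) * ((B + n)/(1 + n)) * (1/2))
        ≤ w n * (3/4) := mul_le_mul_of_nonneg_left hn (hw n).le
      _ = 3/4 * w n := mul_comm _ _
  have hsum : Summable w := summable_of_ratio_norm_eventually_le (by norm_num) hev
  refine ⟨∑' n, w n, lt_of_lt_of_le (hw 0) (Summable.le_tsum hsum 0 fun i _ => (hw i).le), ?_⟩
  intro x hx0 hx
  set u : ℕ → ℝ := fun n => ((ascPochhammer ℝ n).eval a * (ascPochhammer ℝ n).eval b) /
      ((ascPochhammer ℝ n).eval c * (Nat.factorial n : ℝ)) * x ^ n with hudef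
  have hterm : ∀ n, |u n| ≤ w n := by
    intro n
    have h1 : |u n| = |(ascPochhammer ℝ n).eval a * (ascPochhammer ℝ n).eval b| /
        ((ascPochhammer ℝ n).eval c * (Nat.factorial n : ℝ)) * |x ^ n| := by
      rw [hudef]
      rw [abs_mul, abs_div, abs_of_pos (mul_pos (hposc n) (hfac n))]
    rw [h1, hwdef]
    have hxpow : |x ^ n| ≤ (1/2)^n := by
      rw [abs_pow]
      exact pow_le_pow_left₀ (abs_nonneg x) (by rw [abs_of_nonneg hx0]; exact hx) n
    have hnum : |(ascPochhammer ℝ n).eval a * (ascPochhammer ℝ n).eval b| ≤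
        (ascPochhammer ℝ n).eval A * (ascPochhammer ℝ n).eval B := by
      rw [abs_mul]
      exact mul_le_mul (abs_ascPochhammer_le a n) (abs_ascPochhammer_le b n) (abs_nonneg _)
        (le_trans (abs_nonneg _) (abs_ascPochhammer_le a n))
    apply mul_le_mul _ hxpow (abs_nonneg _) _
    · exact (div_le_div_iff_of_pos_right (mul_pos (hposc n) (hfac n))).mpr hnum
    · exact div_nonneg (mul_pos (hposA n) (hposB n)).le (mul_pos (hposc n) (hfac n)).le
  have husum : Summable fun n => |u n| :=
    Summable.of_nonneg_of_le (fun n => abs_nonneg _) hterm hsum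
  have hus : Summable u := summable_abs_iff.mp husum
  have h2 : |gauss2F1 a b c x| ≤ ∑' n, |u n| := by
    have h3 := norm_tsum_le_tsum_norm (f := u) (by simpa [Real.norm_eq_abs] using husum)
    show |∑' n, u n| ≤ ∑' n, |u n|
    simpa [Real.norm_eq_abs] using h3
  exact h2.trans (Summable.tsum_le_tsum hterm husum hsum)

lemma jordan_aux {θ : ℝ} (hθ0 : 0 < θ) (hθ2 : θ ≤ Real.pi / 2) :
    θ ≤ Real.pi * Real.sin (θ / 2) := by
  have hπ := Real.pi_pos
  have h := Real.mul_le_sin (x := θ/2) (by linarith) (by linarith)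
  have e : 2 / Real.pi * (θ/2) = θ / Real.pi := by ring
  rw [e] at h
  calc θ = (θ / Real.pi) * Real.pi := by field_simp
    _ ≤ Real.sin (θ/2) * Real.pi := mul_le_mul_of_nonneg_right h hπ.le
    _ = Real.pi * Real.sin (θ/2) := mul_comm _ _

lemma kernel_lintegral_bound {α : ℝ} (hα : -(1/2) < α) :
    ∃ C₂ : ℝ, 0 < C₂ ∧ ∀ θ ∈ Ioc (0:ℝ) (Real.pi/2),
      (∫⁻ φ in Ioo (0:ℝ) θ, ENNReal.ofReal ((Real.cos φ - Real.cos θ) ^ (α - 1/2))) ≤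
        ENNReal.ofReal (C₂ * Real.sin (θ/2) ^ (2*α)) := by
  have hπ := Real.pi_pos
  have h12 : (0:ℝ) < α + 1/2 := by linarith
  have hC2pos : 0 < Real.pi * ((2:ℝ) ^ (α - 1/2) + 1) * (1 + (α + 1/2)⁻¹) := by
    have h1 : (0:ℝ) < (2:ℝ) ^ (α - 1/2) := Real.rpow_pos_of_pos two_pos _
    have h2 : (0:ℝ) < (α + 1/2)⁻¹ := inv_pos.mpr h12
    exact mul_pos (mul_pos hπ (by linarith)) (by linarith)
  refine ⟨Real.pi * ((2:ℝ) ^ (α - 1/2) + 1) * (1 + (α + 1/2)⁻¹), hC2pos, ?_⟩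
  intro θ hθ
  obtain ⟨hθ0, hθ2⟩ := hθ
  have hs : 0 < Real.sin (θ/2) :=
    Real.sin_pos_of_pos_of_lt_pi (by linarith) (by linarith)
  have hjordan : θ ≤ Real.pi * Real.sin (θ/2) := jordan_aux hθ0 hθ2
  have hspow : (0:ℝ) < Real.sin (θ/2) ^ (2*α) := Real.rpow_pos_of_pos hs _
  have h2pow : (0:ℝ) < (2:ℝ) ^ (α - 1/2) := Real.rpow_pos_of_pos two_pos _
  have hinv : (0:ℝ) < (α + 1/2)⁻¹ := inv_pos.mpr h12
  rcases le_or_gt (1/2 : ℝ) α with hcase | hcase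
  · -- exponent nonneg
    have hpt : ∀ φ ∈ Ioo (0:ℝ) θ, (Real.cos φ - Real.cos θ) ^ (α - 1/2) ≤
        (2:ℝ) ^ (α - 1/2) * Real.sin (θ/2) ^ (2*α - 1) := by
      intro φ hφ
      have hub : Real.cos φ - Real.cos θ ≤ 2 * Real.sin (θ/2)^2 := by
        have e : Real.cos 0 - Real.cos θ = 2 * Real.sin (θ/2)^2 := by
          rw [Real.cos_sub_cos]
          simp only [zero_add, zero_sub]
          rw [show (-θ)/2 = -(θ/2) by ring, Real.sin_neg]
          ring
        have := Real.cos_le_one φ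
        rw [Real.cos_zero] at e
        linarith
      have hlb : 0 ≤ Real.cos φ - Real.cos θ := by
        have := Real.cos_le_cos_of_nonneg_of_le_pi hφ.1.le (by linarith) hφ.2.le
        linarith
      calc (Real.cos φ - Real.cos θ) ^ (α - 1/2)
          ≤ (2 * Real.sin (θ/2)^2) ^ (α - 1/2) :=
            Real.rpow_le_rpow hlb hub (by linarith)
        _ = (2:ℝ) ^ (α - 1/2) * (Real.sin (θ/2)^2) ^ (α - 1/2) :=
            Real.mul_rpow (by norm_num) (sq_nonneg _)
        _ = (2:ℝ) ^ (α - 1/2) * Real.sin (θ/2) ^ (2*α - 1) := by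
            congr 1
            rw [← Real.rpow_natCast (Real.sin (θ/2)) 2, ← Real.rpow_mul hs.le]
            norm_num
            congr 1
            ring
    calc (∫⁻ φ in Ioo (0:ℝ) θ, ENNReal.ofReal ((Real.cos φ - Real.cos θ) ^ (α - 1/2)))
        ≤ ∫⁻ _ in Ioo (0:ℝ) θ,
            ENNReal.ofReal ((2:ℝ) ^ (α - 1/2) * Real.sin (θ/2) ^ (2*α - 1)) := by
          apply lintegral_mono_ae
          filter_upwards [ae_restrict_mem measurableSet_Ioo] with φ hφ
          exact ENNReal.ofReal_le_ofReal (hpt φ hφ)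
      _ = ENNReal.ofReal ((2:ℝ) ^ (α - 1/2) * Real.sin (θ/2) ^ (2*α - 1)) *
            volume (Ioo (0:ℝ) θ) := setLIntegral_const _ _
      _ = ENNReal.ofReal ((2:ℝ) ^ (α - 1/2) * Real.sin (θ/2) ^ (2*α - 1) * θ) := by
          rw [Real.volume_Ioo, sub_zero, ← ENNReal.ofReal_mul (by positivity)]
      _ ≤ ENNReal.ofReal (Real.pi * ((2:ℝ) ^ (α - 1/2) + 1) * (1 + (α + 1/2)⁻¹) *
            Real.sin (θ/2) ^ (2*α)) := by
          apply ENNReal.ofReal_le_ofReal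
          have e1 : Real.sin (θ/2) ^ (2*α - 1) * Real.sin (θ/2) = Real.sin (θ/2) ^ (2*α) := by
            rw [← Real.rpow_add_one hs.ne' (2*α - 1)]
            congr 1
            ring
          calc (2:ℝ) ^ (α - 1/2) * Real.sin (θ/2) ^ (2*α - 1) * θ
              ≤ (2:ℝ) ^ (α - 1/2) * Real.sin (θ/2) ^ (2*α - 1) * (Real.pi * Real.sin (θ/2)) := by
                apply mul_le_mul_of_nonneg_left hjordan
                positivity
            _ = Real.pi * (2:ℝ) ^ (α - 1/2) * Real.sin (θ/2) ^ (2*α) := by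
                rw [← e1]; ring
            _ ≤ Real.pi * ((2:ℝ) ^ (α - 1/2) + 1) * (1 + (α + 1/2)⁻¹) *
                Real.sin (θ/2) ^ (2*α) := by
                apply mul_le_mul_of_nonneg_right _ hspow.le
                nlinarith
  · -- exponent negative
    set p := α - 1/2 with hpdef
    have hp0 : p ≤ 0 := by rw [hpdef]; linarith
    have hp1 : (-1:ℝ) < p := by rw [hpdef]; linarith
    have hp1' : (0:ℝ) < p + 1 := by linarith
    have hlow : ∀ φ ∈ Ioo (0:ℝ) θ,
        Real.sin (θ/2) * (θ - φ) / Real.pi ≤ Real.cos φ - Real.cos θ := by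
      intro φ hφ
      obtain ⟨hφ0, hφθ⟩ := hφ
      have e : Real.cos φ - Real.cos θ = 2 * Real.sin ((φ+θ)/2) * Real.sin ((θ-φ)/2) := by
        rw [Real.cos_sub_cos, show (φ - θ)/2 = -((θ-φ)/2) by ring, Real.sin_neg]
        ring
      have h1 : Real.sin (θ/2) ≤ Real.sin ((φ+θ)/2) :=
        Real.sin_le_sin_of_le_of_le_pi_div_two (by linarith) (by linarith) (by linarith)
      have h2 : (θ - φ)/Real.pi ≤ Real.sin ((θ-φ)/2) := by
        have h := Real.mul_le_sin (x := (θ-φ)/2) (by linarith) (by linarith)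
        have e2 : 2/Real.pi * ((θ-φ)/2) = (θ-φ)/Real.pi := by ring
        rw [e2] at h
        exact h
      have h3 : Real.sin (θ/2) * ((θ-φ)/Real.pi) ≤
          Real.sin ((φ+θ)/2) * Real.sin ((θ-φ)/2) :=
        mul_le_mul h1 h2 (div_nonneg (by linarith) hπ.le) (le_trans hs.le h1)
      have h4 : 0 ≤ Real.sin (θ/2) * ((θ-φ)/Real.pi) :=
        mul_nonneg hs.le (div_nonneg (by linarith) hπ.le)
      have h6 : Real.sin (θ/2) * (θ - φ) / Real.pi =
          Real.sin (θ/2) * ((θ-φ)/Real.pi) := by ring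
      rw [e, h6]
      nlinarith [h3, h4]
    have hpt : ∀ φ ∈ Ioo (0:ℝ) θ, (Real.cos φ - Real.cos θ) ^ p ≤
        (Real.sin (θ/2)/Real.pi) ^ p * (θ - φ) ^ p := by
      intro φ hφ
      have hsub : 0 < θ - φ := sub_pos.mpr hφ.2
      have hb : 0 < Real.sin (θ/2) * (θ - φ) / Real.pi :=
        div_pos (mul_pos hs hsub) hπ
      calc (Real.cos φ - Real.cos θ) ^ p
          ≤ (Real.sin (θ/2) * (θ - φ) / Real.pi) ^ p :=
            Real.rpow_le_rpow_of_nonpos hb (hlow φ hφ) hp0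
        _ = (Real.sin (θ/2)/Real.pi) ^ p * (θ - φ) ^ p := by
            rw [← Real.mul_rpow (by positivity) hsub.le]
            congr 1
            ring
    have h1 : IntervalIntegrable (fun x : ℝ => x ^ p) volume 0 θ :=
      intervalIntegral.intervalIntegrable_rpow' hp1
    have h2 : IntervalIntegrable (fun x : ℝ => (θ - x) ^ p) volume 0 θ := by
      have h := h1.comp_sub_left θ
      simpa using h.symm
    have hint : IntegrableOn (fun φ : ℝ => (θ - φ) ^ p) (Ioo 0 θ) :=
      ((intervalIntegrable_iff_integrableOn_Ioc_of_le hθ0.le).mp h2).mono_set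
        Ioo_subset_Ioc_self
    have hval : ∫ φ in Ioo (0:ℝ) θ, (θ - φ) ^ p = θ ^ (p+1) / (p+1) := by
      rw [← integral_Ioc_eq_integral_Ioo, ← intervalIntegral.integral_of_le hθ0.le,
        intervalIntegral.integral_comp_sub_left (fun x => x ^ p) θ]
      simp only [sub_self, sub_zero]
      rw [integral_rpow (Or.inl hp1), Real.zero_rpow (ne_of_gt hp1'), sub_zero]
    have hsπ : (0:ℝ) ≤ Real.sin (θ/2) / Real.pi := by positivity
    calc (∫⁻ φ in Ioo (0:ℝ) θ, ENNReal.ofReal ((Real.cos φ - Real.cos θ) ^ (α - 1/2)))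
        ≤ ∫⁻ φ in Ioo (0:ℝ) θ,
            ENNReal.ofReal ((Real.sin (θ/2)/Real.pi) ^ p * (θ - φ) ^ p) := by
          apply lintegral_mono_ae
          filter_upwards [ae_restrict_mem measurableSet_Ioo] with φ hφ
          exact ENNReal.ofReal_le_ofReal (hpt φ hφ)
      _ = ENNReal.ofReal ((Real.sin (θ/2)/Real.pi) ^ p) *
            ∫⁻ φ in Ioo (0:ℝ) θ, ENNReal.ofReal ((θ - φ) ^ p) := by
          rw [← lintegral_const_mul' _ _ ENNReal.ofReal_ne_top]
          apply lintegral_congr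
          intro φ
          rw [← ENNReal.ofReal_mul (Real.rpow_nonneg hsπ _)]
      _ = ENNReal.ofReal ((Real.sin (θ/2)/Real.pi) ^ p) *
            ENNReal.ofReal (θ ^ (p+1) / (p+1)) := by
          congr 1
          rw [← hval, ← ofReal_integral_eq_lintegral_ofReal hint ?_]
          filter_upwards [ae_restrict_mem measurableSet_Ioo] with φ hφ
          exact Real.rpow_nonneg (by linarith [hφ.2]) _
      _ ≤ ENNReal.ofReal (Real.pi * ((2:ℝ) ^ (α - 1/2) + 1) * (1 + (α + 1/2)⁻¹) *
            Real.sin (θ/2) ^ (2*α)) := by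
          rw [← ENNReal.ofReal_mul (Real.rpow_nonneg hsπ _)]
          apply ENNReal.ofReal_le_ofReal
          have h5 : θ ^ (p+1) ≤ (Real.pi * Real.sin (θ/2)) ^ (p+1) :=
            Real.rpow_le_rpow hθ0.le hjordan hp1'.le
          have e3 : (Real.sin (θ/2)/Real.pi) ^ p *
              ((Real.pi * Real.sin (θ/2)) ^ (p+1) / (p+1))
              = Real.pi * (p+1)⁻¹ * Real.sin (θ/2) ^ (2*α) := by
            rw [Real.div_rpow hs.le hπ.le, Real.mul_rpow hπ.le hs.le,
              Real.rpow_add_one (ne_of_gt hπ) p,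
              show (2*α : ℝ) = p + (p+1) by rw [hpdef]; ring,
              Real.rpow_add hs p (p+1)]
            have hπp : Real.pi ^ p ≠ 0 := ne_of_gt (Real.rpow_pos_of_pos hπ _)
            calc Real.sin (θ/2) ^ p / Real.pi ^ p *
                (Real.pi ^ p * Real.pi * Real.sin (θ/2) ^ (p+1) / (p+1))
                = (Real.pi ^ p / Real.pi ^ p) * (Real.pi * (p+1)⁻¹ *
                    (Real.sin (θ/2) ^ p * Real.sin (θ/2) ^ (p+1))) := by ring
              _ = Real.pi * (p+1)⁻¹ *
                    (Real.sin (θ/2) ^ p * Real.sin (θ/2) ^ (p+1)) := by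
                  rw [div_self hπp, one_mul]
          calc (Real.sin (θ/2)/Real.pi) ^ p * (θ ^ (p+1) / (p+1))
              ≤ (Real.sin (θ/2)/Real.pi) ^ p *
                  ((Real.pi * Real.sin (θ/2)) ^ (p+1) / (p+1)) := by
                apply mul_le_mul_of_nonneg_left _ (Real.rpow_nonneg hsπ _)
                exact (div_le_div_iff_of_pos_right hp1').mpr h5
            _ = Real.pi * (p+1)⁻¹ * Real.sin (θ/2) ^ (2*α) := e3
            _ ≤ Real.pi * ((2:ℝ) ^ (α - 1/2) + 1) * (1 + (α + 1/2)⁻¹) *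
                Real.sin (θ/2) ^ (2*α) := by
                apply mul_le_mul_of_nonneg_right _ hspow.le
                have hq : p + 1 = α + 1/2 := by rw [hpdef]; ring
                rw [hq]
                nlinarith [h2pow, hinv, hπ]


lemma measurable_rpow_const (c : ℝ) : Measurable fun x : ℝ => x ^ c :=
  measurable_of_continuousOn_compl_singleton 0 fun x hx =>
    (Real.continuousAt_rpow_const x c (Or.inl hx)).continuousWithinAt

lemma ofReal_integral_le {μ : MeasureTheory.Measure ℝ} {f : ℝ → ℝ} (hnn : 0 ≤ᵐ[μ] f) :
    ENNReal.ofReal (∫ x, f x ∂μ) ≤ ∫⁻ x, ENNReal.ofReal (f x) ∂μ := by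
  by_cases hi : MeasureTheory.Integrable f μ
  · rw [MeasureTheory.ofReal_integral_eq_lintegral_ofReal hi hnn]
  · rw [MeasureTheory.integral_undef hi]; simp

end GDMaux

open ENNReal in
/-- For `α > -1/2`, `β > -1` and `f ∈ L_{(α,β)}`, the function `g` is integrable
on `[0, π/2]` with `∫_0^{π/2} |g(φ)| dφ ≤ C ‖f‖_{L_{(α,β)}}`, where `C` depends
only on `α` and `β`. -/
theorem gDirichletMehler_integrable (α β : ℝ) (hα : -(1/2) < α) (hβ : -1 < β) :
    ∃ C > (0 : ℝ), ∀ f : ℝ → ℝ, MemJacobiL α β f →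
      IntegrableOn (gDirichletMehler α β f) (Ioc 0 (Real.pi / 2)) ∧
      (∫ φ in Ioc (0 : ℝ) (Real.pi / 2), |gDirichletMehler α β f φ|)
        ≤ C * jacobiNorm α β f := by
  obtain ⟨M, hM0, hM⟩ := GDMaux.gauss2F1_bound ((α+β+1)/2) ((α+β)/2) (α+1/2) (by linarith)
  obtain ⟨C₂, hC₂0, hC₂⟩ := GDMaux.kernel_lintegral_bound hα
  have hπ := Real.pi_pos
  set C₁ : ℝ := max 1 ((1/2 : ℝ) ^ (-α - β)) with hC₁def
  have hC₁0 : (0:ℝ) < C₁ := lt_of_lt_of_le one_pos (le_max_left _ _)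
  have hCnn : (0:ℝ) ≤ C₁ * M * C₂ := le_of_lt (mul_pos (mul_pos hC₁0 hM0) hC₂0)
  refine ⟨C₁ * M * C₂, mul_pos (mul_pos hC₁0 hM0) hC₂0, ?_⟩
  have hw_meas : Measurable (jacobiWeight α β) := by
    apply Measurable.mul
    · exact (GDMaux.measurable_rpow_const _).comp
        (Real.measurable_sin.comp (measurable_id.div_const 2))
    · exact (GDMaux.measurable_rpow_const _).comp
        (Real.measurable_cos.comp (measurable_id.div_const 2))
  have hw_nonneg : ∀ θ ∈ Ioc (0:ℝ) Real.pi, 0 ≤ jacobiWeight α β θ := by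
    intro θ hθ
    have h1 : 0 ≤ Real.sin (θ/2) :=
      Real.sin_nonneg_of_nonneg_of_le_pi (by linarith [hθ.1]) (by linarith [hθ.2])
    have h2 : 0 ≤ Real.cos (θ/2) :=
      Real.cos_nonneg_of_mem_Icc ⟨by linarith [hθ.1], by linarith [hθ.2]⟩
    exact mul_nonneg (Real.rpow_nonneg h1 _) (Real.rpow_nonneg h2 _)
  suffices H : ∀ f : ℝ → ℝ, MemJacobiL α β f → Measurable f →
      IntegrableOn (gDirichletMehler α β f) (Ioc 0 (Real.pi / 2)) ∧
      (∫ φ in Ioc (0 : ℝ) (Real.pi / 2), |gDirichletMehler α β f φ|)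
        ≤ C₁ * M * C₂ * jacobiNorm α β f by
    intro f hf
    have haem : AEMeasurable f (volume.restrict (Ioc 0 Real.pi)) := by
      have h1 : AEMeasurable (fun θ => f θ * jacobiWeight α β θ)
          (volume.restrict (Ioc 0 Real.pi)) := hf.aemeasurable
      have h2 : AEMeasurable (fun θ => (f θ * jacobiWeight α β θ) * (jacobiWeight α β θ)⁻¹)
          (volume.restrict (Ioc 0 Real.pi)) := h1.mul (hw_meas.inv.aemeasurable)
      refine h2.congr ?_
      have h3 : (fun θ => (f θ * jacobiWeight α β θ) * (jacobiWeight α β θ)⁻¹)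
          =ᵐ[volume.restrict (Ioo 0 Real.pi)] f := by
        refine (ae_restrict_iff' measurableSet_Ioo).mpr (ae_of_all _ fun θ hθ => ?_)
        have hs : 0 < Real.sin (θ/2) :=
          Real.sin_pos_of_pos_of_lt_pi (by linarith [hθ.1]) (by linarith [hθ.2])
        have hc : 0 < Real.cos (θ/2) :=
          Real.cos_pos_of_mem_Ioo ⟨by linarith [hθ.1], by linarith [hθ.2]⟩
        have hwpos : jacobiWeight α β θ ≠ 0 :=
          ne_of_gt (mul_pos (Real.rpow_pos_of_pos hs _) (Real.rpow_pos_of_pos hc _))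
        field_simp
      rwa [Measure.restrict_congr_set Ioo_ae_eq_Ioc] at h3
    set f' := haem.mk f with hf'def
    have hf'm : Measurable f' := haem.measurable_mk
    have hff' : f =ᵐ[volume.restrict (Ioc 0 Real.pi)] f' := haem.ae_eq_mk
    have hprod : (fun θ => f θ * jacobiWeight α β θ) =ᵐ[volume.restrict (Ioc 0 Real.pi)]
        (fun θ => f' θ * jacobiWeight α β θ) := hff'.mono fun θ h => by simp only [h]
    have habs : (fun θ => |f θ| * jacobiWeight α β θ) =ᵐ[volume.restrict (Ioc 0 Real.pi)]
        (fun θ => |f' θ| * jacobiWeight α β θ) := hff'.mono fun θ h => by simp only [h]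
    have hf'mem : MemJacobiL α β f' := hf.congr hprod
    have hnorm_eq : jacobiNorm α β f = jacobiNorm α β f' := integral_congr_ae habs
    have hg_eq : ∀ φ ∈ Ioc (0:ℝ) (Real.pi/2),
        gDirichletMehler α β f φ = gDirichletMehler α β f' φ := by
      intro φ hφ
      unfold gDirichletMehler
      congr 1
      apply integral_congr_ae
      have hsub : Ioc φ (Real.pi/2) ⊆ Ioc 0 Real.pi :=
        Ioc_subset_Ioc hφ.1.le (by linarith)
      have h : f =ᵐ[volume.restrict (Ioc φ (Real.pi/2))] f' :=
        ae_mono (Measure.restrict_mono hsub le_rfl) hff'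
      exact h.mono fun θ hθ => by simp only [hθ]
    obtain ⟨hint, hbd⟩ := H f' hf'mem hf'm
    constructor
    · exact hint.congr_fun (fun x hx => (hg_eq x hx).symm) measurableSet_Ioc
    · calc (∫ φ in Ioc (0:ℝ) (Real.pi/2), |gDirichletMehler α β f φ|)
          = ∫ φ in Ioc (0:ℝ) (Real.pi/2), |gDirichletMehler α β f' φ| :=
            setIntegral_congr_fun measurableSet_Ioc fun φ hφ => by rw [hg_eq φ hφ]
        _ ≤ C₁ * M * C₂ * jacobiNorm α β f' := hbd
        _ = C₁ * M * C₂ * jacobiNorm α β f := by rw [hnorm_eq]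
  intro f hf hfm
  -- abbreviations
  set k : ℝ → ℝ → ℝ := fun φ θ => (Real.cos φ - Real.cos θ) ^ (α - 1/2) with hkdef
  set v : ℝ → ℝ := fun θ => Real.sin (θ/2) * Real.cos (θ/2) ^ (2*β+1) with hvdef
  set G : ℝ → ℝ → ℝ := fun φ θ =>
    f θ * (Real.cos φ - Real.cos θ) ^ (α - 1/2) * Real.sin (θ / 2) *
      Real.cos (θ / 2) ^ (2 * β + 1) *
      gauss2F1 ((α + β + 1) / 2) ((α + β) / 2) (α + 1/2)
        ((Real.cos φ - Real.cos θ) / (1 + Real.cos φ)) with hGdef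
  have hGrepr : gDirichletMehler α β f = fun φ =>
      Real.cos (φ / 2) ^ (-α - β) * ∫ θ in Ioc φ (Real.pi / 2), G φ θ := rfl
  set F : ℝ → ℝ → ℝ≥0∞ := fun φ θ => ENNReal.ofReal (C₁ * M * (|f θ| * (k φ θ * v θ)))
    with hFdef
  set T : Set (ℝ×ℝ) := {p | p.1 < p.2} with hTdef
  have hTm : MeasurableSet T := measurableSet_lt measurable_fst measurable_snd
  set F' : ℝ → ℝ → ℝ≥0∞ := fun φ θ => T.indicator (fun p => F p.1 p.2) (φ, θ) with hF'def
  -- measurability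
  have hk_meas : Measurable fun p : ℝ×ℝ => k p.1 p.2 :=
    (GDMaux.measurable_rpow_const _).comp
      ((Real.measurable_cos.comp measurable_fst).sub (Real.measurable_cos.comp measurable_snd))
  have hv_meas : Measurable v :=
    (Real.measurable_sin.comp (measurable_id.div_const 2)).mul
      ((GDMaux.measurable_rpow_const _).comp
        (Real.measurable_cos.comp (measurable_id.div_const 2)))
  have hFu_meas : Measurable fun p : ℝ×ℝ => F p.1 p.2 := by
    apply ENNReal.measurable_ofReal.comp
    exact ((hfm.comp measurable_snd).abs.mul
      (hk_meas.mul (hv_meas.comp measurable_snd))).const_mul _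
  have hF'_meas : Measurable fun p : ℝ×ℝ => F' p.1 p.2 := by
    have e : (fun p : ℝ×ℝ => F' p.1 p.2) = T.indicator fun p => F p.1 p.2 := by
      funext p
      simp only [hF'def]
    rw [e]
    exact hFu_meas.indicator hTm
  have hG_meas : Measurable fun p : ℝ×ℝ => G p.1 p.2 := by
    simp only [hGdef]
    apply Measurable.mul
    · apply Measurable.mul
      · apply Measurable.mul
        · exact (hfm.comp measurable_snd).mul hk_meas
        · exact Real.measurable_sin.comp (measurable_snd.div_const 2)
      · exact (GDMaux.measurable_rpow_const _).comp
          (Real.measurable_cos.comp (measurable_snd.div_const 2))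
    · exact (GDMaux.measurable_gauss2F1 _ _ _).comp
        (((Real.measurable_cos.comp measurable_fst).sub
            (Real.measurable_cos.comp measurable_snd)).div
          (measurable_const.add (Real.measurable_cos.comp measurable_fst)))
  have hg_meas : Measurable (gDirichletMehler α β f) := by
    rw [hGrepr]
    apply Measurable.mul
    · exact (GDMaux.measurable_rpow_const _).comp
        (Real.measurable_cos.comp (measurable_id.div_const 2))
    · have hSm : MeasurableSet {p : ℝ×ℝ | p.1 < p.2 ∧ p.2 ≤ Real.pi/2} := by
        apply MeasurableSet.inter
        · exact measurableSet_lt measurable_fst measurable_snd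
        · exact measurable_snd measurableSet_Iic
      have heq : (fun φ => ∫ θ in Ioc φ (Real.pi/2), G φ θ) = fun φ =>
          ∫ θ, ({p : ℝ×ℝ | p.1 < p.2 ∧ p.2 ≤ Real.pi/2}).indicator
            (fun p : ℝ×ℝ => G p.1 p.2) (φ, θ) := by
        funext φ
        rw [← integral_indicator measurableSet_Ioc]
        have e2 : (Ioc φ (Real.pi/2)).indicator (G φ) = fun θ =>
            ({p : ℝ×ℝ | p.1 < p.2 ∧ p.2 ≤ Real.pi/2}).indicator
              (fun p : ℝ×ℝ => G p.1 p.2) (φ, θ) := by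
          funext θ
          by_cases h : φ < θ ∧ θ ≤ Real.pi/2 <;>
            simp [indicator_apply, mem_Ioc, mem_setOf_eq, h]
        rw [e2]
      rw [heq]
      exact ((hG_meas.indicator hSm).stronglyMeasurable.integral_prod_right').measurable
  -- region facts
  have harg : ∀ φ θ : ℝ, φ ∈ Ioc (0:ℝ) (Real.pi/2) → θ ∈ Ioc φ (Real.pi/2) →
      0 ≤ (Real.cos φ - Real.cos θ)/(1 + Real.cos φ) ∧
      (Real.cos φ - Real.cos θ)/(1 + Real.cos φ) ≤ 1/2 ∧ 0 ≤ Real.cos φ - Real.cos θ := by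
    intro φ θ hφ hθ
    have hφ0 := hφ.1
    have hθπ : θ ≤ Real.pi := by linarith [hθ.2]
    have hcc : Real.cos θ ≤ Real.cos φ :=
      Real.cos_le_cos_of_nonneg_of_le_pi hφ0.le hθπ hθ.1.le
    have hcθ : 0 ≤ Real.cos θ :=
      Real.cos_nonneg_of_mem_Icc ⟨by linarith [hθ.1], hθ.2⟩
    have hcφ1 : Real.cos φ ≤ 1 := Real.cos_le_one φ
    have hd : (0:ℝ) < 1 + Real.cos φ := by
      have := Real.neg_one_le_cos φ
      -- cos φ ≥ 0 in fact
      have h0 : 0 ≤ Real.cos φ :=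
        Real.cos_nonneg_of_mem_Icc ⟨by linarith, hφ.2⟩
      linarith
    refine ⟨div_nonneg (by linarith) hd.le, ?_, by linarith⟩
    rw [div_le_iff₀ hd]
    linarith
  -- claim 1 : pointwise domination of |g| by the lintegral of F
  have claim1 : ∀ φ ∈ Ioc (0:ℝ) (Real.pi/2),
      ENNReal.ofReal |gDirichletMehler α β f φ| ≤
        ∫⁻ θ in Ioc φ (Real.pi/2), F φ θ := by
    intro φ hφ
    have hφ0 : 0 < φ := hφ.1
    have hcosφ2 : (0:ℝ) < Real.cos (φ/2) :=
      Real.cos_pos_of_mem_Ioo ⟨by linarith, by linarith [hφ.2]⟩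
    have hC₁b : Real.cos (φ/2) ^ (-α-β) ≤ C₁ := by
      rcases le_or_gt 0 (-α-β) with h | h
      · exact le_trans (Real.rpow_le_one hcosφ2.le (Real.cos_le_one _) h) (le_max_left _ _)
      · refine le_trans ?_ (le_max_right _ _)
        apply Real.rpow_le_rpow_of_nonpos (by norm_num) ?_ h.le
        have h2 : Real.cos (Real.pi/3) ≤ Real.cos (φ/2) :=
          Real.cos_le_cos_of_nonneg_of_le_pi (by linarith) (by linarith) (by linarith [hφ.2])
        rw [Real.cos_pi_div_three] at h2
        exact h2
    have hrp0 : (0:ℝ) ≤ Real.cos (φ/2) ^ (-α-β) := Real.rpow_nonneg hcosφ2.le _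
    have hgabs : |gDirichletMehler α β f φ| ≤ Real.cos (φ/2) ^ (-α-β) *
        ∫ θ in Ioc φ (Real.pi/2), |G φ θ| := by
      rw [hGrepr]
      simp only []
      rw [abs_mul, abs_of_nonneg hrp0]
      apply mul_le_mul_of_nonneg_left _ hrp0
      simpa [Real.norm_eq_abs] using
        norm_integral_le_integral_norm (μ := volume.restrict (Ioc φ (Real.pi/2))) (G φ)
    have hptG : ∀ θ ∈ Ioc φ (Real.pi/2), Real.cos (φ/2) ^ (-α-β) * |G φ θ| ≤
        C₁ * M * (|f θ| * (k φ θ * v θ)) := by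
      intro θ hθ
      obtain ⟨h1, h2, h3⟩ := harg φ θ hφ hθ
      have hk0 : 0 ≤ k φ θ := Real.rpow_nonneg h3 _
      have hsθ : 0 ≤ Real.sin (θ/2) :=
        Real.sin_nonneg_of_nonneg_of_le_pi (by linarith [hθ.1]) (by linarith [hθ.2])
      have hcθ2 : (0:ℝ) ≤ Real.cos (θ/2) ^ (2*β+1) := by
        apply Real.rpow_nonneg
        exact (Real.cos_pos_of_mem_Ioo
          ⟨by linarith [hθ.1], by linarith [hθ.2]⟩).le
      have hFb := hM _ h1 h2
      have habsG : |G φ θ| = |f θ| * k φ θ * Real.sin (θ/2) * Real.cos (θ/2) ^ (2*β+1) *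
          |gauss2F1 ((α+β+1)/2) ((α+β)/2) (α+1/2)
            ((Real.cos φ - Real.cos θ)/(1 + Real.cos φ))| := by
        simp only [hGdef, hkdef]
        rw [abs_mul, abs_mul, abs_mul, abs_mul, abs_of_nonneg (show (0:ℝ) ≤ (Real.cos φ - Real.cos θ) ^ (α - 1/2) from hk0),
          abs_of_nonneg hsθ, abs_of_nonneg hcθ2]
      rw [habsG]
      have hXnn : 0 ≤ |f θ| * k φ θ * Real.sin (θ/2) * Real.cos (θ/2) ^ (2*β+1) :=
        mul_nonneg (mul_nonneg (mul_nonneg (abs_nonneg _) hk0) hsθ) hcθ2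
      calc Real.cos (φ/2) ^ (-α-β) * (|f θ| * k φ θ * Real.sin (θ/2) *
              Real.cos (θ/2) ^ (2*β+1) *
              |gauss2F1 ((α+β+1)/2) ((α+β)/2) (α+1/2)
                ((Real.cos φ - Real.cos θ)/(1 + Real.cos φ))|)
          ≤ C₁ * (|f θ| * k φ θ * Real.sin (θ/2) * Real.cos (θ/2) ^ (2*β+1) * M) := by
            apply mul_le_mul hC₁b (mul_le_mul_of_nonneg_left hFb hXnn)
              (mul_nonneg hXnn (abs_nonneg _)) hC₁0.le
        _ = C₁ * M * (|f θ| * (k φ θ * v θ)) := by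
            simp only [hvdef]
            ring
    calc ENNReal.ofReal |gDirichletMehler α β f φ|
        ≤ ENNReal.ofReal (Real.cos (φ/2) ^ (-α-β) *
            ∫ θ in Ioc φ (Real.pi/2), |G φ θ|) := ENNReal.ofReal_le_ofReal hgabs
      _ = ENNReal.ofReal (Real.cos (φ/2) ^ (-α-β)) *
            ENNReal.ofReal (∫ θ in Ioc φ (Real.pi/2), |G φ θ|) :=
          ENNReal.ofReal_mul hrp0
      _ ≤ ENNReal.ofReal (Real.cos (φ/2) ^ (-α-β)) *
            ∫⁻ θ in Ioc φ (Real.pi/2), ENNReal.ofReal |G φ θ| :=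
          mul_le_mul_right (GDMaux.ofReal_integral_le (ae_of_all _ fun θ => abs_nonneg _)) _
      _ = ∫⁻ θ in Ioc φ (Real.pi/2),
            ENNReal.ofReal (Real.cos (φ/2) ^ (-α-β)) * ENNReal.ofReal |G φ θ| :=
          (lintegral_const_mul' _ _ ENNReal.ofReal_ne_top).symm
      _ ≤ ∫⁻ θ in Ioc φ (Real.pi/2), F φ θ := by
          apply lintegral_mono_ae
          filter_upwards [ae_restrict_mem measurableSet_Ioc] with θ hθ
          rw [← ENNReal.ofReal_mul hrp0]
          simp only [hFdef]
          exact ENNReal.ofReal_le_ofReal (hptG θ hθ)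
  -- integrability of the weight against |f|
  have hwint : Integrable (fun θ => |f θ| * jacobiWeight α β θ)
      (volume.restrict (Ioc 0 Real.pi)) := by
    refine hf.abs.congr ?_
    filter_upwards [ae_restrict_mem measurableSet_Ioc] with θ hθ
    rw [abs_mul, abs_of_nonneg (hw_nonneg θ hθ)]
  have hN0 : 0 ≤ jacobiNorm α β f :=
    setIntegral_nonneg measurableSet_Ioc fun θ hθ =>
      mul_nonneg (abs_nonneg _) (hw_nonneg θ hθ)
  -- the key chain of inequalities
  have key : (∫⁻ φ in Ioc (0:ℝ) (Real.pi/2), ENNReal.ofReal |gDirichletMehler α β f φ|) ≤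
      ENNReal.ofReal (C₁ * M * C₂ * jacobiNorm α β f) := by
    calc (∫⁻ φ in Ioc (0:ℝ) (Real.pi/2), ENNReal.ofReal |gDirichletMehler α β f φ|)
        ≤ ∫⁻ φ in Ioc (0:ℝ) (Real.pi/2), ∫⁻ θ in Ioc φ (Real.pi/2), F φ θ := by
          apply lintegral_mono_ae
          filter_upwards [ae_restrict_mem measurableSet_Ioc] with φ hφ
          exact claim1 φ hφ
      _ = ∫⁻ φ in Ioc (0:ℝ) (Real.pi/2), ∫⁻ θ in Ioc (0:ℝ) (Real.pi/2), F' φ θ := by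
          apply setLIntegral_congr_fun measurableSet_Ioc
          intro φ hφ
          beta_reduce
          have e1 : (fun θ => F' φ θ) = (Ioi φ).indicator (fun θ => F φ θ) := by
            funext θ
            simp only [hF'def, hTdef, indicator_apply, mem_setOf_eq, mem_Ioi]
          rw [e1, lintegral_indicator measurableSet_Ioi,
            Measure.restrict_restrict measurableSet_Ioi, inter_comm, Set.Ioc_inter_Ioi,
            sup_eq_right.mpr hφ.1.le]
      _ = ∫⁻ θ in Ioc (0:ℝ) (Real.pi/2), ∫⁻ φ in Ioc (0:ℝ) (Real.pi/2), F' φ θ :=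
          lintegral_lintegral_swap hF'_meas.aemeasurable
      _ ≤ ∫⁻ θ in Ioc (0:ℝ) (Real.pi/2),
            ENNReal.ofReal (C₁ * M * C₂ * (|f θ| * jacobiWeight α β θ)) := by
          apply lintegral_mono_ae
          filter_upwards [ae_restrict_mem measurableSet_Ioc] with θ hθ
          have hsθ : 0 < Real.sin (θ/2) :=
            Real.sin_pos_of_pos_of_lt_pi (by linarith [hθ.1]) (by linarith [hθ.2])
          have hcθ : 0 < Real.cos (θ/2) :=
            Real.cos_pos_of_mem_Ioo ⟨by linarith [hθ.1], by linarith [hθ.2]⟩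
          have hv0 : 0 ≤ v θ := by
            simp only [hvdef]
            exact mul_nonneg hsθ.le (Real.rpow_nonneg hcθ.le _)
          have hnn1 : 0 ≤ C₁ * M * (|f θ| * v θ) :=
            mul_nonneg (mul_nonneg hC₁0.le hM0.le) (mul_nonneg (abs_nonneg _) hv0)
          have e1 : (fun φ => F' φ θ) = (Iio θ).indicator (fun φ => F φ θ) := by
            funext φ
            simp only [hF'def, hTdef, indicator_apply, mem_setOf_eq, mem_Iio]
          have hset : Iio θ ∩ Ioc (0:ℝ) (Real.pi/2) = Ioo 0 θ := by
            ext x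
            simp only [mem_inter_iff, mem_Iio, mem_Ioc, mem_Ioo]
            constructor
            · rintro ⟨h1, h2, h3⟩
              exact ⟨h2, h1⟩
            · rintro ⟨h1, h2⟩
              exact ⟨h2, h1, le_trans h2.le hθ.2⟩
          rw [e1, lintegral_indicator measurableSet_Iio,
            Measure.restrict_restrict measurableSet_Iio, hset]
          have hsplit : ∀ φ : ℝ, F φ θ =
              ENNReal.ofReal (C₁ * M * (|f θ| * v θ)) * ENNReal.ofReal (k φ θ) := by
            intro φ
            simp only [hFdef]
            rw [← ENNReal.ofReal_mul hnn1]
            congr 1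
            ring
          simp only [hsplit, hkdef]
          rw [lintegral_const_mul' _ _ ENNReal.ofReal_ne_top]
          calc ENNReal.ofReal (C₁ * M * (|f θ| * v θ)) *
                ∫⁻ φ in Ioo (0:ℝ) θ, ENNReal.ofReal ((Real.cos φ - Real.cos θ) ^ (α - 1/2))
              ≤ ENNReal.ofReal (C₁ * M * (|f θ| * v θ)) *
                  ENNReal.ofReal (C₂ * Real.sin (θ/2) ^ (2*α)) :=
                mul_le_mul_right (hC₂ θ hθ) _
            _ = ENNReal.ofReal (C₁ * M * C₂ * (|f θ| * jacobiWeight α β θ)) := by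
                rw [← ENNReal.ofReal_mul hnn1]
                congr 1
                simp only [hvdef]
                unfold jacobiWeight
                rw [show Real.sin (θ/2) ^ (2*α+1) =
                  Real.sin (θ/2) ^ (2*α) * Real.sin (θ/2) from
                    Real.rpow_add_one hsθ.ne' (2*α)]
                ring
      _ = ENNReal.ofReal (C₁ * M * C₂) *
            ∫⁻ θ in Ioc (0:ℝ) (Real.pi/2), ENNReal.ofReal (|f θ| * jacobiWeight α β θ) := by
          rw [← lintegral_const_mul' _ _ ENNReal.ofReal_ne_top]
          apply lintegral_congr
          intro θ
          rw [← ENNReal.ofReal_mul hCnn]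
      _ ≤ ENNReal.ofReal (C₁ * M * C₂) *
            ∫⁻ θ in Ioc (0:ℝ) Real.pi, ENNReal.ofReal (|f θ| * jacobiWeight α β θ) :=
          mul_le_mul_right (lintegral_mono_set (Ioc_subset_Ioc_right (by linarith))) _
      _ = ENNReal.ofReal (C₁ * M * C₂) * ENNReal.ofReal (jacobiNorm α β f) := by
          congr 1
          rw [← ofReal_integral_eq_lintegral_ofReal hwint ?_]
          · rfl
          · filter_upwards [ae_restrict_mem measurableSet_Ioc] with θ hθ
            exact mul_nonneg (abs_nonneg _) (hw_nonneg θ hθ)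
      _ = ENNReal.ofReal (C₁ * M * C₂ * jacobiNorm α β f) :=
          (ENNReal.ofReal_mul hCnn).symm
  constructor
  · refine ⟨hg_meas.aestronglyMeasurable, ?_⟩
    rw [hasFiniteIntegral_iff_norm]
    have e : (∫⁻ φ in Ioc (0:ℝ) (Real.pi/2), ENNReal.ofReal ‖gDirichletMehler α β f φ‖) =
        ∫⁻ φ in Ioc (0:ℝ) (Real.pi/2), ENNReal.ofReal |gDirichletMehler α β f φ| := by
      simp only [Real.norm_eq_abs]
    rw [e]
    exact lt_of_le_of_lt key ENNReal.ofReal_lt_top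
  · rw [integral_eq_lintegral_of_nonneg_ae (ae_of_all _ fun φ => abs_nonneg _)
      hg_meas.abs.aestronglyMeasurable]
    refine le_trans (ENNReal.toReal_mono ENNReal.ofReal_ne_top key) ?_
    rw [ENNReal.toReal_ofReal (mul_nonneg hCnn hN0)]
end

section
/- Let α, β be real numbers with α > -1/2 and β > -1, and let ε > 0. Then there exists a function f ∈ L_{(α,β)} such that sup_{k ∈ ℕ₀} (k+1)^{ε} |f̂_{(α,β)}(k)| = ∞. In particular, no uniform rate of decay of the Fourier–Jacobi coefficients holds for general f ∈ L_{(α,β)}. -/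
open MeasureTheory Filter Set

noncomputable section

section NoRateAux

open Real MeasureTheory Set

namespace NoRateAux

variable {α β : ℝ}

lemma rpow_abs_le {x₀ x e : ℝ} (h0 : 0 < x₀) (h1 : x₀ ≤ x) (h2 : x ≤ 1) :
    x₀ ^ |e| ≤ x ^ e := by
  rcases le_or_gt 0 e with he | he
  · rw [abs_of_nonneg he]
    exact Real.rpow_le_rpow h0.le h1 he
  · rw [abs_of_neg he]
    have hx : 0 < x := h0.trans_le h1
    have l1 : 1 ≤ x ^ e := Real.one_le_rpow_of_pos_of_le_one_of_nonpos hx h2 he.le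
    have l2 : x₀ ^ (-e) ≤ 1 := Real.rpow_le_one h0.le (h1.trans h2) (by linarith)
    linarith

lemma genBinom_zero {a : ℝ} (ha : 0 < a + 1) : genBinom a 0 = 1 := by
  have h := Real.Gamma_pos_of_pos ha
  simp only [genBinom, Nat.cast_zero, sub_zero, zero_add, Real.Gamma_one, one_mul]
  exact div_self h.ne'

lemma jacobiP_one_pos (hα : (0:ℝ) < α + 1) (hβ : (0:ℝ) < β + 1) (k : ℕ) :
    0 < jacobiP α β k 1 := by
  have hk : (0:ℝ) ≤ (k:ℝ) := Nat.cast_nonneg k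
  have h1 : jacobiP α β k 1 = genBinom ((k:ℝ) + α) k := by
    unfold jacobiP
    rw [Finset.sum_eq_single 0]
    · have h0 : genBinom ((k:ℝ) + β) 0 = 1 := genBinom_zero (by linarith)
      norm_num [h0]
    · intro s _ hs
      have hz : ((1:ℝ) - 1) / 2 = 0 := by norm_num
      rw [hz, zero_pow hs]
      ring
    · intro h
      exact absurd (Finset.mem_range.2 (Nat.succ_pos k)) h
  rw [h1]
  unfold genBinom
  have e1 : (0:ℝ) < (k:ℝ) + α + 1 := by linarith
  have e2 : (0:ℝ) < (k:ℝ) + 1 := by linarith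
  have e3 : (0:ℝ) < (k:ℝ) + α - (k:ℝ) + 1 := by
    have : (k:ℝ) + α - (k:ℝ) + 1 = α + 1 := by ring
    rw [this]; linarith
  exact div_pos (Real.Gamma_pos_of_pos e1)
    (mul_pos (Real.Gamma_pos_of_pos e2) (Real.Gamma_pos_of_pos e3))

lemma continuous_jacobiP (α β : ℝ) (k : ℕ) : Continuous fun x : ℝ => jacobiP α β k x := by
  unfold jacobiP
  exact continuous_finset_sum _ fun s _ => by fun_prop

lemma continuous_jacobiR (α β : ℝ) (k : ℕ) : Continuous fun x : ℝ => jacobiR α β k x := by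
  unfold jacobiR
  exact (continuous_jacobiP α β k).div_const _

lemma continuous_jacobiRcos (α β : ℝ) (k : ℕ) :
    Continuous fun θ : ℝ => jacobiR α β k (Real.cos θ) :=
  (continuous_jacobiR α β k).comp Real.continuous_cos

lemma exists_jacobiR_bound (α β : ℝ) (k : ℕ) :
    ∃ C : ℝ, 0 ≤ C ∧ ∀ θ : ℝ, |jacobiR α β k (Real.cos θ)| ≤ C := by
  obtain ⟨C, hC⟩ := (isCompact_Icc (a := (-1:ℝ)) (b := 1)).exists_bound_of_continuousOn
    (continuous_jacobiR α β k).continuousOn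
  refine ⟨max C 0, le_max_right _ _, fun θ => ?_⟩
  have h := hC (Real.cos θ) ⟨Real.neg_one_le_cos θ, Real.cos_le_one θ⟩
  rw [Real.norm_eq_abs] at h
  exact h.trans (le_max_left _ _)

lemma weight_nonneg {θ : ℝ} (h1 : 0 ≤ θ) (h2 : θ ≤ π) : 0 ≤ jacobiWeight α β θ := by
  have hπ := Real.pi_pos
  have hs : 0 ≤ Real.sin (θ/2) :=
    Real.sin_nonneg_of_nonneg_of_le_pi (by linarith) (by linarith)
  have hc : 0 ≤ Real.cos (θ/2) := Real.cos_nonneg_of_mem_Icc ⟨by linarith, by linarith⟩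
  exact mul_nonneg (Real.rpow_nonneg hs _) (Real.rpow_nonneg hc _)

lemma weight_continuousOn (α β : ℝ) : ContinuousOn (jacobiWeight α β) (Ioo 0 π) := by
  have hπ := Real.pi_pos
  unfold jacobiWeight
  apply ContinuousOn.mul
  · apply ContinuousOn.rpow_const
    · exact (Continuous.continuousOn (by fun_prop))
    · intro x hx
      exact Or.inl (ne_of_gt (Real.sin_pos_of_pos_of_lt_pi (by linarith [hx.1]) (by linarith [hx.2])))
  · apply ContinuousOn.rpow_const
    · exact (Continuous.continuousOn (by fun_prop))
    · intro x hx
      exact Or.inl (ne_of_gt (Real.cos_pos_of_mem_Ioo ⟨by linarith [hx.1], by linarith [hx.2]⟩))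

lemma weight_integrableOn (hα : -(1/2:ℝ) < α) (hβ : (-1:ℝ) < β) :
    IntegrableOn (jacobiWeight α β) (Ioo 0 π) := by
  have hπ := Real.pi_pos
  set c : ℝ := min (2*β+1) 0 with hcdef
  have hc0 : c ≤ 0 := min_le_right _ _
  have hc1 : (-1:ℝ) < c := lt_min (by linarith) (by norm_num)
  have hα' : (0:ℝ) ≤ 2*α+1 := by linarith
  have hdom : IntegrableOn (fun θ : ℝ => (π - θ) ^ c / π ^ c) (Ioo 0 π) := by
    apply Integrable.div_const
    have h1 : IntervalIntegrable (fun x : ℝ => x ^ c) volume 0 π :=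
      intervalIntegral.intervalIntegrable_rpow' hc1
    have h2 := h1.comp_sub_left π
    rw [sub_zero, sub_self] at h2
    have h3 := h2.symm
    rwa [intervalIntegrable_iff_integrableOn_Ioo_of_le (le_of_lt hπ)] at h3
  apply Integrable.mono' hdom
    ((weight_continuousOn α β).aestronglyMeasurable measurableSet_Ioo)
  filter_upwards [ae_restrict_mem measurableSet_Ioo] with θ hθ
  obtain ⟨hθ1, hθ2⟩ := hθ
  have hs1 : 0 < Real.sin (θ/2) :=
    Real.sin_pos_of_pos_of_lt_pi (by linarith) (by linarith)
  have hcpos : 0 < Real.cos (θ/2) := Real.cos_pos_of_mem_Ioo ⟨by linarith, by linarith⟩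
  have hlow : (π - θ)/π ≤ Real.cos (θ/2) := by
    have hms := Real.mul_le_sin (x := (π - θ)/2) (by linarith) (by linarith)
    have he : Real.sin ((π - θ)/2) = Real.cos (θ/2) := by
      rw [show (π - θ)/2 = π/2 - θ/2 by ring, Real.sin_pi_div_two_sub]
    rw [he] at hms
    calc (π - θ)/π = 2/π * ((π - θ)/2) := by field_simp
    _ ≤ Real.cos (θ/2) := hms
  have hppos : 0 < (π - θ)/π := div_pos (by linarith) hπ
  have b1 : Real.sin (θ/2) ^ (2*α+1) ≤ 1 := Real.rpow_le_one hs1.le (Real.sin_le_one _) hα'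
  have b2 : Real.cos (θ/2) ^ (2*β+1) ≤ Real.cos (θ/2) ^ c :=
    Real.rpow_le_rpow_of_exponent_ge hcpos (Real.cos_le_one _) (min_le_left _ _)
  have b3 : Real.cos (θ/2) ^ c ≤ ((π - θ)/π) ^ c :=
    Real.rpow_le_rpow_of_nonpos hppos hlow hc0
  have b4 : ((π - θ)/π) ^ c = (π - θ) ^ c / π ^ c := Real.div_rpow (by linarith : (0:ℝ) ≤ π - θ) hπ.le c
  have hwn : 0 ≤ jacobiWeight α β θ := weight_nonneg hθ1.le hθ2.le
  rw [Real.norm_eq_abs, abs_of_nonneg hwn]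
  calc jacobiWeight α β θ ≤ 1 * (((π - θ)/π) ^ c) := by
        unfold jacobiWeight
        exact mul_le_mul b1 (b2.trans b3) (Real.rpow_nonneg hcpos.le _) one_pos.le
  _ = (π - θ) ^ c / π ^ c := by rw [one_mul, b4]

lemma weight_lower {d : ℝ} (hd0 : 0 < d) (hdπ : d ≤ π) {θ : ℝ} (hθ : θ ∈ Icc (d/4) (d/2)) :
    Real.sin (d/8) ^ |2*α+1| * Real.cos (d/4) ^ |2*β+1| ≤ jacobiWeight α β θ := by
  obtain ⟨h1, h2⟩ := hθ
  have hπ := Real.pi_pos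
  have hs0 : 0 < Real.sin (d/8) :=
    Real.sin_pos_of_pos_of_lt_pi (by linarith) (by linarith)
  have hsin_mono : Real.sin (d/8) ≤ Real.sin (θ/2) :=
    Real.sin_le_sin_of_le_of_le_pi_div_two (by linarith) (by linarith) (by linarith)
  have hc0 : 0 < Real.cos (d/4) := Real.cos_pos_of_mem_Ioo ⟨by linarith, by linarith⟩
  have hcos_mono : Real.cos (d/4) ≤ Real.cos (θ/2) :=
    Real.cos_le_cos_of_nonneg_of_le_pi (by linarith) (by linarith) (by linarith)
  have hb : 0 ≤ Real.sin (θ/2) ^ (2*α+1) :=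
    Real.rpow_nonneg (hs0.trans_le hsin_mono).le _
  unfold jacobiWeight
  exact mul_le_mul (rpow_abs_le hs0 hsin_mono (Real.sin_le_one _))
    (rpow_abs_le hc0 hcos_mono (Real.cos_le_one _))
    (Real.rpow_nonneg hc0.le _) hb

end NoRateAux

end NoRateAux
section MainProof

open MeasureTheory Filter Set Real
open scoped NNReal ENNReal

/-- For `α > -1/2`, `β > -1` and any `ε > 0` there exists `f ∈ L_{(α,β)}` with
`sup_k (k+1)^ε |f̂_{(α,β)}(k)| = ∞`: no uniform rate of decay of the
Fourier–Jacobi coefficients holds for general `f ∈ L_{(α,β)}`. -/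
theorem no_rate_of_decay_jacobi_coeff (α β : ℝ) (hα : -(1/2) < α) (hβ : -1 < β)
    (ε : ℝ) (hε : 0 < ε) :
    ∃ f : ℝ → ℝ, MemJacobiL α β f ∧
      ¬ BddAbove (Set.range fun k : ℕ =>
          ((k : ℝ) + 1) ^ ε * |fourierJacobi α β f k|) := by
  classical
  have hπ := Real.pi_pos
  have hα1 : (0:ℝ) < α + 1 := by linarith
  have hβ1 : (0:ℝ) < β + 1 := by linarith
  set ν : Measure ℝ := volume.restrict (Ioo 0 π) with hν
  set ρ : ℝ → ℝ≥0 := fun θ => (jacobiWeight α β θ).toNNReal with hρdef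
  have hρmeas : AEMeasurable ρ ν := by
    have h1 : AEMeasurable (jacobiWeight α β) ν :=
      (NoRateAux.weight_continuousOn α β).aemeasurable measurableSet_Ioo
    exact measurable_real_toNNReal.comp_aemeasurable h1
  set μ : Measure ℝ := ν.withDensity (fun θ => (ρ θ : ℝ≥0∞)) with hμ
  have hρcoe : ∀ θ ∈ Ioo (0:ℝ) π, ((ρ θ : ℝ)) = jacobiWeight α β θ := fun θ hθ =>
    Real.coe_toNNReal _ (NoRateAux.weight_nonneg hθ.1.le hθ.2.le)
  have hwint : IntegrableOn (jacobiWeight α β) (Ioo 0 π) :=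
    NoRateAux.weight_integrableOn hα hβ
  haveI hfin : IsFiniteMeasure μ := by
    constructor
    rw [hμ, withDensity_apply _ MeasurableSet.univ, Measure.restrict_univ]
    calc ∫⁻ θ, (ρ θ : ℝ≥0∞) ∂ν ≤ ∫⁻ θ, (‖jacobiWeight α β θ‖₊ : ℝ≥0∞) ∂ν := by
          apply lintegral_mono
          intro θ
          apply ENNReal.coe_le_coe.mpr
          apply Real.toNNReal_le_iff_le_coe.mpr
          rw [coe_nnnorm, Real.norm_eq_abs]
          exact le_abs_self _
    _ < ⊤ := hwint.2
  haveI : Fact ((1:ℝ≥0∞) ≤ 1) := ⟨le_rfl⟩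
  choose C hC0 hCb using NoRateAux.exists_jacobiR_bound α β
  have hg_cont : ∀ k : ℕ, Continuous fun θ : ℝ => jacobiR α β k (Real.cos θ) :=
    NoRateAux.continuous_jacobiRcos α β
  have hint : ∀ (k : ℕ) (u : Lp ℝ 1 μ),
      Integrable (fun x => jacobiR α β k (Real.cos x) * u x) μ := by
    intro k u
    exact (L1.integrable_coeFn u).bdd_mul (hg_cont k).aestronglyMeasurable
      (ae_of_all _ fun x => by rw [Real.norm_eq_abs]; exact hCb k x)
  set T : ℕ → Lp ℝ 1 μ →L[ℝ] ℝ := fun k =>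
    LinearMap.mkContinuous
      { toFun := fun u => ∫ x, jacobiR α β k (Real.cos x) * u x ∂μ
        map_add' := by
          intro u v
          rw [← integral_add (hint k u) (hint k v)]
          apply integral_congr_ae
          filter_upwards [Lp.coeFn_add u v] with x hx
          rw [hx]
          simp [mul_add]
        map_smul' := by
          intro c u
          rw [RingHom.id_apply]
          calc ∫ x, jacobiR α β k (Real.cos x) * (c • u) x ∂μ
              = ∫ x, c * (jacobiR α β k (Real.cos x) * u x) ∂μ := by
                apply integral_congr_ae
                filter_upwards [Lp.coeFn_smul c u] with x hx
                rw [hx, Pi.smul_apply, smul_eq_mul]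
                ring
          _ = c * ∫ x, jacobiR α β k (Real.cos x) * u x ∂μ := integral_const_mul _ _
          _ = c • ∫ x, jacobiR α β k (Real.cos x) * u x ∂μ := by rw [smul_eq_mul] }
      (C k)
      (fun u => by
        have hu : Integrable (fun x => ‖u x‖) μ := (L1.integrable_coeFn u).norm
        calc ‖∫ x, jacobiR α β k (Real.cos x) * u x ∂μ‖
            ≤ ∫ x, ‖jacobiR α β k (Real.cos x) * u x‖ ∂μ := norm_integral_le_integral_norm _
        _ ≤ ∫ x, C k * ‖u x‖ ∂μ := by
            apply integral_mono (hint k u).norm (hu.const_mul _)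
            intro x
            dsimp only
            rw [norm_mul]
            exact mul_le_mul_of_nonneg_right
              (by rw [Real.norm_eq_abs]; exact hCb k x) (norm_nonneg _)
        _ = C k * ∫ x, ‖u x‖ ∂μ := integral_const_mul _ _
        _ = C k * ‖u‖ := by rw [L1.norm_eq_integral_norm]) with hT
  have hT_apply : ∀ (k : ℕ) (u : Lp ℝ 1 μ),
      T k u = ∫ x, jacobiR α β k (Real.cos x) * u x ∂μ := fun k u => rfl
  have hT_eq : ∀ (k : ℕ) (u : Lp ℝ 1 μ), T k u = fourierJacobi α β (⇑u) k := by
    intro k u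
    rw [hT_apply]
    rw [show (∫ x, jacobiR α β k (Real.cos x) * u x ∂μ)
        = ∫ x, (ρ x : ℝ) • (jacobiR α β k (Real.cos x) * u x) ∂ν from
      integral_withDensity_eq_integral_smul₀ hρmeas _]
    unfold fourierJacobi
    rw [integral_Ioc_eq_integral_Ioo, ← hν]
    apply integral_congr_ae
    filter_upwards [ae_restrict_mem measurableSet_Ioo] with x hx
    rw [smul_eq_mul, hρcoe x hx]
    ring
  have hMem : ∀ u : Lp ℝ 1 μ, MemJacobiL α β ⇑u := by
    intro u
    unfold MemJacobiL
    rw [integrableOn_Ioc_iff_integrableOn_Ioo, IntegrableOn, ← hν]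
    have h1 : Integrable (⇑u) μ := L1.integrable_coeFn u
    have h1' : Integrable (fun x => (ρ x : ℝ) • (u x : ℝ)) ν :=
      (integrable_withDensity_iff_integrable_coe_smul₀ hρmeas).mp h1
    refine (integrable_congr ?_).mp h1'
    filter_upwards [ae_restrict_mem measurableSet_Ioo] with x hx
    rw [smul_eq_mul, hρcoe x hx]
    ring
  have hTnorm : ∀ k : ℕ, (1:ℝ)/2 ≤ ‖T k‖ := by
    intro k
    have hg1 : jacobiR α β k (Real.cos 0) = 1 := by
      rw [Real.cos_zero]
      exact div_self (NoRateAux.jacobiP_one_pos hα1 hβ1 k).ne'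
    have hcont := (hg_cont k).continuousAt (x := 0)
    rw [Metric.continuousAt_iff] at hcont
    obtain ⟨δ, hδ0, hδ⟩ := hcont (1/2) (by norm_num)
    set d := min δ π with hd
    have hd0 : 0 < d := lt_min hδ0 hπ
    have hdπ : d ≤ π := min_le_right _ _
    have hdδ : d ≤ δ := min_le_left _ _
    set s : Set ℝ := Ioc (d/4) (d/2) with hs
    have hs_meas : MeasurableSet s := measurableSet_Ioc
    have hs_sub : s ⊆ Ioo 0 π := fun θ hθ => ⟨by linarith [hθ.1], by linarith [hθ.2]⟩
    have hg_half : ∀ θ ∈ s, (1:ℝ)/2 ≤ jacobiR α β k (Real.cos θ) := by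
      intro θ hθ
      have h1 : dist θ 0 < δ := by
        rw [Real.dist_eq, sub_zero, abs_of_pos (by linarith [hθ.1])]
        linarith [hθ.2]
      have h2 := hδ h1
      rw [Real.dist_eq, hg1] at h2
      have h3 := abs_lt.mp h2
      linarith [h3.1]
    set m : ℝ := Real.sin (d/8) ^ |2*α+1| * Real.cos (d/4) ^ |2*β+1| with hm
    have hm0 : 0 < m := by
      apply mul_pos (Real.rpow_pos_of_pos ?_ _) (Real.rpow_pos_of_pos ?_ _)
      · exact Real.sin_pos_of_pos_of_lt_pi (by linarith) (by linarith)
      · exact Real.cos_pos_of_mem_Ioo ⟨by linarith, by linarith⟩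
    have hμs_low : ENNReal.ofReal m * volume s ≤ μ s := by
      rw [hμ, withDensity_apply _ hs_meas, hν, Measure.restrict_restrict hs_meas,
        inter_eq_left.mpr hs_sub]
      rw [← setLIntegral_const s (ENNReal.ofReal m)]
      apply setLIntegral_mono' hs_meas
      intro θ hθ
      have h1 : m ≤ jacobiWeight α β θ :=
        NoRateAux.weight_lower hd0 hdπ (Ioc_subset_Icc_self hθ)
      calc ENNReal.ofReal m ≤ ENNReal.ofReal (jacobiWeight α β θ) :=
            ENNReal.ofReal_le_ofReal h1
      _ = ((ρ θ : ℝ≥0) : ℝ≥0∞) := rfl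
    have hvs : volume s = ENNReal.ofReal (d/4) := by
      rw [hs, Real.volume_Ioc]
      congr 1
      ring
    have hμs_pos : 0 < μ s := by
      apply lt_of_lt_of_le _ hμs_low
      rw [hvs]
      apply ENNReal.mul_pos
      · exact (ENNReal.ofReal_pos.mpr hm0).ne'
      · exact (ENNReal.ofReal_pos.mpr (by linarith)).ne'
    have hμs_ne_top : μ s ≠ ⊤ := measure_ne_top μ s
    have htoReal_pos : 0 < (μ s).toReal := ENNReal.toReal_pos hμs_pos.ne' hμs_ne_top
    set u₀ : Lp ℝ 1 μ := indicatorConstLp 1 hs_meas hμs_ne_top (1:ℝ) with hu₀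
    have hu₀norm : ‖u₀‖ = (μ s).toReal := by
      rw [hu₀, norm_indicatorConstLp one_ne_zero ENNReal.one_ne_top]
      simp
      rfl
    have hgint : IntegrableOn (fun x => jacobiR α β k (Real.cos x)) s μ := by
      apply Integrable.mono' (integrable_const (C k)) (hg_cont k).aestronglyMeasurable.restrict
      exact ae_of_all _ fun x => by rw [Real.norm_eq_abs]; exact hCb k x
    have hTu₀ : (1:ℝ)/2 * (μ s).toReal ≤ T k u₀ := by
      have h1 : T k u₀ = ∫ x in s, jacobiR α β k (Real.cos x) ∂μ := by
        rw [hT_apply, ← integral_indicator hs_meas]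
        apply integral_congr_ae
        filter_upwards [indicatorConstLp_coeFn (p := 1) (μ := μ) (s := s)
          (hs := hs_meas) (hμs := hμs_ne_top) (c := (1:ℝ))] with x hx
        rw [hu₀, hx]
        by_cases hxs : x ∈ s
        · simp [Set.indicator_of_mem hxs]
        · simp [Set.indicator_of_notMem hxs]
      rw [h1]
      exact setIntegral_ge_of_const_le_real hs_meas hμs_ne_top hg_half hgint
    have hb := (T k).le_opNorm u₀
    rw [hu₀norm, Real.norm_eq_abs] at hb
    have h2 : (1:ℝ)/2 * (μ s).toReal ≤ ‖T k‖ * (μ s).toReal :=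
      le_trans (hTu₀.trans (le_abs_self _)) hb
    exact le_of_mul_le_mul_right h2 htoReal_pos
  by_contra hcon
  push_neg at hcon
  set S : ℕ → Lp ℝ 1 μ →L[ℝ] ℝ := fun k => (((k:ℝ)+1) ^ ε) • T k with hS
  have hS_apply : ∀ (k : ℕ) (u : Lp ℝ 1 μ), S k u = ((k:ℝ)+1)^ε * T k u := fun k u => rfl
  have hpt : ∀ u : Lp ℝ 1 μ, ∃ Cu : ℝ, ∀ k, ‖S k u‖ ≤ Cu := by
    intro u
    obtain ⟨Cu, hCu⟩ := hcon (⇑u) (hMem u)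
    refine ⟨Cu, fun k => ?_⟩
    rw [hS_apply, Real.norm_eq_abs, abs_mul,
      abs_of_nonneg (Real.rpow_nonneg (by positivity) _), hT_eq k u]
    exact hCu (Set.mem_range_self k)
  obtain ⟨C', hC'⟩ := banach_steinhaus hpt
  have hSnorm : ∀ k : ℕ, ((k:ℝ)+1)^ε * (1/2) ≤ ‖S k‖ := by
    intro k
    have h1 : ‖S k‖ = (((k:ℝ)+1)^ε) * ‖T k‖ := by
      have h0 := norm_smul ((((k:ℝ)+1))^ε) (T k)
      rw [Real.norm_eq_abs, abs_of_nonneg (Real.rpow_nonneg (by positivity) _)] at h0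
      exact h0
    rw [h1]
    exact mul_le_mul_of_nonneg_left (hTnorm k) (Real.rpow_nonneg (by positivity) _)
  have hC'half : (1:ℝ)/2 ≤ C' := by
    have h1 := hSnorm 0
    have h2 := hC' 0
    rw [Nat.cast_zero, zero_add, Real.one_rpow, one_mul] at h1
    linarith
  have hx0 : (0:ℝ) ≤ 2*C' + 1 := by linarith
  set n : ℕ := ⌈(2*C' + 1) ^ (1/ε)⌉₊ with hn
  have h1 : (2*C' + 1) ^ (1/ε) ≤ (n:ℝ) + 1 := (Nat.le_ceil _).trans (by linarith)
  have h2 : 2*C' + 1 ≤ ((n:ℝ)+1) ^ ε := by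
    have h := Real.rpow_le_rpow (Real.rpow_nonneg hx0 _) h1 hε.le
    rwa [← Real.rpow_mul hx0, one_div, inv_mul_cancel₀ hε.ne', Real.rpow_one] at h
  have h3 := hSnorm n
  have h4 := hC' n
  linarith

end MainProof
end
end
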